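/- arXiv:2012.00162 — 4 statements merged into one kernel-verified Lean document; each statement's English description precedes it below -/
import Mathlib

section
/- There exist sets Z ⊆ ℝ² and E ⊆ ℝ² such that the Lebesgue measure of ℝ² \ E is zero, the characteristic function χ_Z of Z is, at each point of E, differentiable in almost every direction, and χ_Z is at no point x ∈ ℝ² Lipschitz relative to E. -/
open Metric MeasureTheory Filter Set

noncomputable section

/-- The Euclidean plane. -/
abbrev E2 := EuclideanSpace ℝ (Fin 2)

/-- `f` is differentiable at `x` in direction `u`: the one-sided limit
`lim_{h→0+} (f(x+hu)−f(x))/h` exists and is finite. -/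
def DiffAtInDir (f : E2 → ℝ) (x u : E2) : Prop :=
  ∃ L : ℝ, Filter.Tendsto (fun h : ℝ => (f (x + h • u) - f x) / h)
    (nhdsWithin (0 : ℝ) (Set.Ioi 0)) (nhds L)

/-- `f` is differentiable at `x` in almost every direction: the set of unit directions in which
it fails to be differentiable at `x` has zero one-dimensional Hausdorff measure. -/
def DiffAEDirs (f : E2 → ℝ) (x : E2) : Prop :=
  MeasureTheory.Measure.hausdorffMeasure 1
    {u : E2 | u ∈ Metric.sphere (0 : E2) 1 ∧ ¬ DiffAtInDir f x u} = 0

/-- `f` is Lipschitz at `x` relative to `M`: either `x` is not a limit point of `M`, or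
`limsup_{y→x, y∈M} |f(y)−f(x)|/‖y−x‖ < ∞`. -/
def LipAtRel (f : E2 → ℝ) (x : E2) (M : Set E2) : Prop :=
  x ∉ closure (M \ {x}) ∨
  Filter.IsBoundedUnder (· ≤ ·) (nhdsWithin x (M \ {x}))
    (fun y : E2 => |f y - f x| / ‖y - x‖)

/-!
Take the balls of radius `rad j = 3^(-j²) / 100` about the dyadic points `(a, b) / 2^j` of every
level `j`, and let `Z` be the set of points lying in an odd number of them.

Almost every `x` stays at distance `8^(-j)` from the level-`j` dyadic points for all large `j`.
A ray from such an `x` can then enter a level-`j` ball only within an arc of directions of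
length `O(8^j rad j)`; there are `O(4^j)` of these balls within distance `1`, and
`∑ 32^j rad j < ∞`, so by Borel–Cantelli almost every ray from `x` meets finitely many balls,
and `χ_Z` is constant on an initial segment of it.

Conversely, every point is close to a dyadic point `c`, which is the centre of a ball of each
finer level. Choose `J` so large that the spheres of the coarse levels stay away from the ball
`B(c, rad J)`. Off a set of small area (the fine balls not centred at `c`), a point of the annulus
`rad (J+1) < |y - c| < rad J` lies in the same balls as a point of the next annulus, except for
the ball `B(c, rad (J+1))`. Hence `χ_Z` takes both values at good points arbitrarily close to
every point.
-/

open scoped NNReal Topology Real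
open NormedSpace (normalize)

namespace DyadicBalls

theorem diffAtInDir_of_eventually_eq {f : E2 → ℝ} {x u : E2}
    (h : ∀ᶠ t in 𝓝[>] (0 : ℝ), f (x + t • u) = f x) : DiffAtInDir f x u :=
  ⟨0, tendsto_const_nhds.congr' (h.mono fun t ht => by simp [ht])⟩

theorem not_lipAtRel_indicator {Z M : Set E2} {x : E2}
    (h : ∀ δ > 0, ∃ y ∈ M, y ≠ x ∧ dist y x < δ ∧ (y ∈ Z ↔ x ∉ Z)) :
    ¬ LipAtRel (Z.indicator fun _ => (1 : ℝ)) x M := by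
  have jump : ∀ {y}, (y ∈ Z ↔ x ∉ Z) →
      |Z.indicator (fun _ => (1 : ℝ)) y - Z.indicator (fun _ => (1 : ℝ)) x| = 1 := by
    intro y hy
    by_cases hx : x ∈ Z
    · simp [hx, show y ∉ Z from fun h => hy.1 h hx]
    · simp [hx, hy.2 hx]
  rintro (hcl | ⟨C, hC⟩)
  · refine hcl (Metric.mem_closure_iff.2 fun δ hδ => ?_)
    obtain ⟨y, hyM, hyx, hyδ, -⟩ := h δ hδ
    exact ⟨y, ⟨hyM, hyx⟩, by rwa [dist_comm]⟩
  · obtain ⟨t, ht, hCt⟩ := Metric.eventually_nhds_iff.1 (eventually_nhdsWithin_iff.1 hC)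
    obtain ⟨y, hyM, hyx, hyδ, hyZ⟩ := h (min t (1 / (|C| + 1))) (by positivity)
    have hpos : 0 < ‖y - x‖ := norm_pos_iff.2 (sub_ne_zero.2 hyx)
    have hsmall : ‖y - x‖ < 1 / (|C| + 1) := by
      rw [← dist_eq_norm]; exact hyδ.trans_le (min_le_right _ _)
    have hbound : 1 / ‖y - x‖ ≤ C := by
      simpa [jump hyZ] using hCt (hyδ.trans_le (min_le_left _ _)) ⟨hyM, hyx⟩
    have : |C| + 1 < 1 / ‖y - x‖ := by
      rw [lt_div_iff₀ hpos]; rwa [lt_div_iff₀ (by positivity), mul_comm] at hsmall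
    linarith [le_abs_self C]

theorem norm_normalize_sub_normalize_le {V : Type*} [NormedAddCommGroup V] [NormedSpace ℝ V]
    (a : V) {w : V} (hw : w ≠ 0) :
    ‖normalize a - normalize w‖ ≤ 2 * ‖a - w‖ / ‖w‖ := by
  have hw' : 0 < ‖w‖ := norm_pos_iff.2 hw
  have hsplit : normalize a - normalize w = (‖a‖⁻¹ - ‖w‖⁻¹) • a + ‖w‖⁻¹ • (a - w) := by
    simp only [NormedSpace.normalize, sub_smul, smul_sub]; abel
  have hrescale : ‖(‖a‖⁻¹ - ‖w‖⁻¹) • a‖ ≤ ‖a - w‖ / ‖w‖ := by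
    rcases eq_or_ne a 0 with rfl | ha
    · simp; positivity
    have ha' : 0 < ‖a‖ := norm_pos_iff.2 ha
    rw [norm_smul, Real.norm_eq_abs, inv_sub_inv ha'.ne' hw'.ne', abs_div,
      abs_of_pos (mul_pos ha' hw'), div_mul_eq_mul_div, mul_comm ‖a‖ ‖w‖,
      mul_div_mul_right _ _ ha'.ne']
    gcongr
    rw [← norm_neg (a - w), neg_sub]
    exact abs_norm_sub_norm_le w a
  calc ‖normalize a - normalize w‖ ≤ ‖a - w‖ / ‖w‖ + ‖a - w‖ / ‖w‖ := by
        rw [hsplit]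
        refine (norm_add_le _ _).trans (add_le_add hrescale ?_)
        rw [norm_smul, norm_inv, norm_norm, inv_mul_eq_div]
    _ = 2 * ‖a - w‖ / ‖w‖ := by ring

theorem mem_ball_iff_of_dist_lt_abs_sub {X : Type*} [PseudoMetricSpace X] {x y c : X} {r : ℝ}
    (h : dist y x < |dist x c - r|) : y ∈ ball c r ↔ x ∈ ball c r := by
  have h₁ := dist_triangle y x c
  have h₂ := dist_triangle x y c
  rw [dist_comm y x] at h h₁
  simp only [mem_ball]
  constructor <;> intro hm <;> cases abs_cases (dist x c - r) <;> linarith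

theorem norm_sq_eq (x : E2) : ‖x‖ ^ 2 = x 0 ^ 2 + x 1 ^ 2 := by
  simp [EuclideanSpace.real_norm_sq_eq, Fin.sum_univ_two]

theorem dist_sq_eq (x y : E2) : dist x y ^ 2 = (x 0 - y 0) ^ 2 + (x 1 - y 1) ^ 2 := by
  simp [dist_eq_norm, norm_sq_eq]

theorem volume_ball_eq (c : E2) {r : ℝ} (hr : 0 ≤ r) :
    volume (ball c r) = ENNReal.ofReal (π * r ^ 2) := by
  rw [EuclideanSpace.volume_ball_fin_two, ← ENNReal.ofReal_pow hr,
    ← ENNReal.ofReal_mul (by positivity), mul_comm]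

theorem abs_sub_apply_le_dist (x y : E2) (i : Fin 2) : |x i - y i| ≤ dist x y := by
  simpa [dist_eq_norm] using PiLp.norm_apply_le (x - y) i

/-- The stereographic parametrisation of the unit circle from `-v`. -/
def stereo (v : E2) (t : ℝ) : E2 :=
  ((1 - t ^ 2) / (1 + t ^ 2)) • v + (2 * t / (1 + t ^ 2)) • !₂[-v 1, v 0]

theorem lipschitzWith_stereo {v : E2} (hv : ‖v‖ = 1) : LipschitzWith 2 (stereo v) := by
  have hv2 : v 0 ^ 2 + v 1 ^ 2 = 1 := by rw [← norm_sq_eq, hv, one_pow]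
  refine LipschitzWith.of_dist_le_mul fun t s => ?_
  have ht : 0 < 1 + t ^ 2 := by positivity
  have hs : 0 < 1 + s ^ 2 := by positivity
  have hsq : dist (stereo v t) (stereo v s) ^ 2 =
      4 * (t - s) ^ 2 / ((1 + t ^ 2) * (1 + s ^ 2)) := by
    rw [dist_sq_eq]
    simp only [stereo, PiLp.add_apply, PiLp.smul_apply, smul_eq_mul, Fin.isValue,
      Matrix.cons_val_zero, Matrix.cons_val_one, Matrix.cons_val_fin_one, mul_neg]
    field_simp
    linear_combination (4 * (t - s) ^ 2 * (1 + t ^ 2) * (1 + s ^ 2)) * hv2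
  refine le_of_pow_le_pow_left₀ two_ne_zero (by positivity) ?_
  push_cast
  rw [hsq, Real.dist_eq, mul_pow, sq_abs, div_le_iff₀ (by positivity)]
  nlinarith [sq_nonneg (t - s), mul_nonneg (sq_nonneg t) (sq_nonneg s)]

theorem sphere_inter_closedBall_subset_image_stereo {v : E2} (hv : ‖v‖ = 1) {w : ℝ}
    (hw : w ≤ 1 / 2) : sphere 0 1 ∩ closedBall v w ⊆ stereo v '' Icc (-w) w := by
  rintro u ⟨hu, huv⟩
  rw [mem_sphere_zero_iff_norm] at hu
  rw [mem_closedBall] at huv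
  have hv2 : v 0 ^ 2 + v 1 ^ 2 = 1 := by rw [← norm_sq_eq, hv, one_pow]
  have hu2 : u 0 ^ 2 + u 1 ^ 2 = 1 := by rw [← norm_sq_eq, hu, one_pow]
  set α := u 0 * v 0 + u 1 * v 1
  set β := u 1 * v 0 - u 0 * v 1
  have hαβ : α ^ 2 + β ^ 2 = 1 := by
    linear_combination (u 0 ^ 2 + u 1 ^ 2) * hv2 + hu2
  have hdist : dist u v ^ 2 = 2 - 2 * α := by
    rw [dist_sq_eq]; linear_combination hu2 + hv2
  have hdw : dist u v ^ 2 ≤ w ^ 2 := pow_le_pow_left₀ dist_nonneg huv 2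
  have hw0 : 0 ≤ w := dist_nonneg.trans huv
  have hα78 : 7 / 8 ≤ α := by nlinarith
  have h1α : 0 < 1 + α := by linarith
  refine ⟨β / (1 + α), ?_, ?_⟩
  · refine abs_le_of_sq_le_sq' ?_ hw0
    rw [div_pow, div_le_iff₀ (by positivity)]
    nlinarith
  · set t := β / (1 + α)
    have hsq : t ^ 2 = (1 - α) / (1 + α) := by
      rw [div_pow, div_eq_div_iff (by positivity) h1α.ne']
      linear_combination (1 + α) * hαβ
    have hcos : (1 - t ^ 2) / (1 + t ^ 2) = α := by
      rw [hsq]; field_simp; ring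
    have hsin : 2 * t / (1 + t ^ 2) = β := by
      rw [hsq]; field_simp; simp only [t]; field_simp; ring
    ext i
    fin_cases i
    · simp only [stereo, hcos, hsin, Fin.isValue, Fin.zero_eta, PiLp.add_apply, PiLp.smul_apply,
        smul_eq_mul, Matrix.cons_val_zero, mul_neg]
      linear_combination u 0 * hv2
    · simp only [stereo, hcos, hsin, Fin.isValue, Fin.mk_one, PiLp.add_apply, PiLp.smul_apply,
        smul_eq_mul, Matrix.cons_val_one, Matrix.cons_val_fin_one]
      linear_combination u 1 * hv2

theorem hausdorffMeasure_sphere_inter_closedBall_le {v : E2} (hv : ‖v‖ = 1) {w : ℝ}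
    (hw : w ≤ 1 / 2) : μH[1] (sphere (0 : E2) 1 ∩ closedBall v w) ≤ ENNReal.ofReal (4 * w) :=
  calc μH[1] (sphere (0 : E2) 1 ∩ closedBall v w) ≤ μH[1] (stereo v '' Icc (-w) w) :=
        measure_mono (sphere_inter_closedBall_subset_image_stereo hv hw)
    _ ≤ (2 : ℝ≥0) ^ (1 : ℝ) * μH[1] (Icc (-w) w) :=
        (lipschitzWith_stereo hv).hausdorffMeasure_image_le zero_le_one _
    _ = ENNReal.ofReal (4 * w) := by
        rw [hausdorffMeasure_real, Real.volume_Icc, show 4 * w = 2 * (w - -w) by ring,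
          ENNReal.ofReal_mul zero_le_two]
        simp

def ctr (j : ℕ) (a b : ℤ) : E2 := !₂[a / 2 ^ j, b / 2 ^ j]

@[simp] theorem ctr_apply_zero (j : ℕ) (a b : ℤ) : ctr j a b 0 = a / 2 ^ j := rfl
@[simp] theorem ctr_apply_one (j : ℕ) (a b : ℤ) : ctr j a b 1 = b / 2 ^ j := rfl

theorem ctr_lift {k m : ℕ} (h : k ≤ m) (a b : ℤ) :
    ctr m (a * 2 ^ (m - k)) (b * 2 ^ (m - k)) = ctr k a b := by
  have h2 : (2 : ℝ) ^ m = 2 ^ k * 2 ^ (m - k) := by rw [← pow_add, Nat.add_sub_cancel' h]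
  ext i
  fin_cases i <;>
    simp only [Fin.zero_eta, Fin.mk_one, Fin.isValue, ctr_apply_zero, ctr_apply_one, Int.cast_mul,
      Int.cast_pow, Int.cast_ofNat, h2] <;>
    field_simp

theorem ctr_inj {j : ℕ} {a b a' b' : ℤ} : ctr j a b = ctr j a' b' ↔ a = a' ∧ b = b' := by
  refine ⟨fun h => ?_, by rintro ⟨rfl, rfl⟩; rfl⟩
  have h0 := congrArg (· 0) h
  have h1 := congrArg (· 1) h
  simp only [ctr_apply_zero, ctr_apply_one] at h0 h1
  exact ⟨by exact_mod_cast (div_left_inj' (by positivity)).1 h0,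
    by exact_mod_cast (div_left_inj' (by positivity)).1 h1⟩

theorem dist_ctr_sq (j : ℕ) (a b a' b' : ℤ) :
    dist (ctr j a b) (ctr j a' b') ^ 2 = (((a - a') ^ 2 + (b - b') ^ 2 : ℤ) : ℝ) / 4 ^ j := by
  rw [dist_sq_eq, show (4 : ℝ) ^ j = (2 ^ j) ^ 2 by rw [← pow_mul, mul_comm, pow_mul]; norm_num]
  simp only [ctr_apply_zero, ctr_apply_one]
  push_cast
  field_simp

theorem half_pow_le_dist_ctr {k l : ℕ} {a b a' b' : ℤ} (h : ctr k a b ≠ ctr l a' b') :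
    (1 / 2) ^ max k l ≤ dist (ctr k a b) (ctr l a' b') := by
  rw [← ctr_lift (le_max_left k l), ← ctr_lift (le_max_right k l)] at h ⊢
  set m := max k l
  generalize a * 2 ^ (m - k) = A, b * 2 ^ (m - k) = B, a' * 2 ^ (m - l) = A',
    b' * 2 ^ (m - l) = B' at h ⊢
  have hne : (A - A') ^ 2 + (B - B') ^ 2 ≠ 0 := by
    intro h0
    exact h (ctr_inj.2 ⟨by nlinarith [sq_nonneg (A - A'), sq_nonneg (B - B')],
      by nlinarith [sq_nonneg (A - A'), sq_nonneg (B - B')]⟩)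
  have hone : (1 : ℝ) ≤ (((A - A') ^ 2 + (B - B') ^ 2 : ℤ) : ℝ) := by
    exact_mod_cast Int.one_le_abs hne |>.trans_eq (abs_of_nonneg (by positivity))
  refine le_of_pow_le_pow_left₀ two_ne_zero dist_nonneg ?_
  rw [dist_ctr_sq, ← pow_mul, mul_comm, pow_mul, le_div_iff₀ (by positivity), ← mul_pow]
  norm_num
  exact_mod_cast hone

theorem exists_dist_ctr_lt (x : E2) {ε : ℝ} (hε : 0 < ε) : ∃ k a b, dist x (ctr k a b) < ε := by
  obtain ⟨k, hk⟩ := exists_pow_lt_of_lt_one (half_pos hε) (by norm_num : (1 / 2 : ℝ) < 1)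
  have hcoord : ∀ t : ℝ, (t - ⌊t * 2 ^ k⌋ / 2 ^ k) ^ 2 < ((1 / 2) ^ k) ^ 2 := by
    intro t
    have h : t - ⌊t * 2 ^ k⌋ / 2 ^ k = Int.fract (t * 2 ^ k) * (1 / 2) ^ k := by
      rw [Int.fract, one_div_pow]; field_simp
    have h0 := Int.fract_nonneg (t * 2 ^ k)
    have h1 := Int.fract_lt_one (t * 2 ^ k)
    rw [h, mul_pow]
    exact mul_lt_of_lt_one_left (by positivity) (by nlinarith)
  refine ⟨k, ⌊x 0 * 2 ^ k⌋, ⌊x 1 * 2 ^ k⌋, lt_of_pow_lt_pow_left₀ 2 hε.le ?_⟩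
  rw [dist_sq_eq, ctr_apply_zero, ctr_apply_one]
  nlinarith [hcoord (x 0), hcoord (x 1), pow_pos (by norm_num : (0 : ℝ) < 1 / 2) k]

def rad (j : ℕ) : ℝ := (1 / 3) ^ (j ^ 2) / 100

theorem rad_pos (j : ℕ) : 0 < rad j := by unfold rad; positivity

theorem rad_le_half_pow (j : ℕ) : rad j ≤ (1 / 2) ^ j / 100 := by
  unfold rad
  gcongr
  calc (1 / 3 : ℝ) ^ (j ^ 2) ≤ (1 / 3) ^ j :=
        pow_le_pow_of_le_one (by norm_num) (by norm_num) (Nat.le_self_pow two_ne_zero j)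
    _ ≤ (1 / 2) ^ j := by gcongr; norm_num

theorem rad_le_one_div_hundred (j : ℕ) : rad j ≤ 1 / 100 :=
  (rad_le_half_pow j).trans (by gcongr; exact pow_le_one₀ (by norm_num) (by norm_num))

theorem rad_succ_le (j : ℕ) : rad (j + 1) ≤ rad j / 3 := by
  have : (1 / 3 : ℝ) ^ ((j + 1) ^ 2) ≤ (1 / 3) ^ (j ^ 2 + 1) :=
    pow_le_pow_of_le_one (by norm_num) (by norm_num) (by ring_nf; omega)
  unfold rad
  rw [pow_succ (1 / 3 : ℝ) (j ^ 2)] at this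
  linarith

theorem rad_strictAnti : StrictAnti rad :=
  strictAnti_nat_of_succ_lt fun j => (rad_succ_le j).trans_lt (by linarith [rad_pos j])

theorem rad_mul_eight_pow_le (j : ℕ) : rad j * 8 ^ j ≤ 3 / 100 := by
  have h : (1 / 3 : ℝ) ^ (j ^ 2) ≤ 3 * (1 / 9) ^ j := by
    have := pow_le_pow_of_le_one (by norm_num : (0 : ℝ) ≤ 1 / 3) (by norm_num)
      (show 2 * j ≤ j ^ 2 + 1 by nlinarith [sq_nonneg ((j : ℤ) - 1)])
    rw [pow_succ, pow_mul] at this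
    norm_num at this ⊢
    linarith
  calc rad j * 8 ^ j ≤ 3 * (1 / 9) ^ j / 100 * 8 ^ j := by unfold rad; gcongr
    _ = 3 * (8 / 9) ^ j / 100 := by rw [div_mul_eq_mul_div, mul_assoc, ← mul_pow]; norm_num
    _ ≤ 3 / 100 := by
        have := pow_le_one₀ (n := j) (by norm_num : (0 : ℝ) ≤ 8 / 9) (by norm_num)
        linarith

theorem summable_thirtyTwo_pow_mul_rad : Summable fun j => (32 : ℝ) ^ j * rad j := by
  have h : ∀ j : ℕ, (1 / 3 : ℝ) ^ (j ^ 2) ≤ 81 * (1 / 81) ^ j := by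
    intro j
    have := pow_le_pow_of_le_one (by norm_num : (0 : ℝ) ≤ 1 / 3) (by norm_num)
      (show 4 * j ≤ j ^ 2 + 4 by nlinarith [sq_nonneg ((j : ℤ) - 2)])
    rw [pow_add, pow_mul] at this
    norm_num at this ⊢
    linarith
  refine Summable.of_nonneg_of_le (fun j => by have := rad_pos j; positivity) (fun j => ?_)
    ((summable_geometric_of_lt_one (by norm_num) (by norm_num : (32 / 81 : ℝ) < 1)).mul_left
      (81 / 100))
  calc (32 : ℝ) ^ j * rad j ≤ 32 ^ j * (81 * (1 / 81) ^ j / 100) := by unfold rad; gcongr; exact h j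
    _ = 81 / 100 * (32 / 81) ^ j := by rw [div_pow, div_pow, one_pow]; field_simp

theorem four_pow_mul_rad_sq_le (j : ℕ) : 4 ^ j * rad j ^ 2 ≤ (4 / 9) ^ j / 10 ^ 4 := by
  have h : (1 / 9 : ℝ) ^ (j ^ 2) ≤ (1 / 9) ^ j :=
    pow_le_pow_of_le_one (by norm_num) (by norm_num) (Nat.le_self_pow two_ne_zero j)
  calc 4 ^ j * rad j ^ 2 = 4 ^ j * (1 / 9) ^ (j ^ 2) / 10 ^ 4 := by
        unfold rad; rw [div_pow, ← pow_mul, mul_comm (j ^ 2), pow_mul]; norm_num; ring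
    _ ≤ 4 ^ j * (1 / 9) ^ j / 10 ^ 4 := by gcongr
    _ = (4 / 9) ^ j / 10 ^ 4 := by rw [← mul_pow]; norm_num

/-- No dyadic point lies on a sphere of the family: `rad l ^ 2` has the factor `5` in its
denominator, while squared distances between dyadic points have powers of `2` only. -/
theorem dist_ctr_ne_rad (k l : ℕ) (a b a' b' : ℤ) : dist (ctr k a b) (ctr l a' b') ≠ rad l := by
  intro h
  rw [← ctr_lift (le_max_left k l), ← ctr_lift (le_max_right k l)] at h
  set m := max k l
  generalize a * 2 ^ (m - k) = A, b * 2 ^ (m - k) = B, a' * 2 ^ (m - l) = A',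
    b' * 2 ^ (m - l) = B' at h
  have hsq := congrArg (· ^ 2) h
  simp only [dist_ctr_sq, rad] at hsq
  have key : ((A - A') ^ 2 + (B - B') ^ 2) * (10 ^ 4 * 9 ^ (l ^ 2)) = (4 : ℤ) ^ m := by
    rw [div_pow, ← pow_mul, div_eq_div_iff (by positivity) (by positivity)] at hsq
    have : ((1 : ℝ) / 3) ^ (l ^ 2 * 2) * 9 ^ (l ^ 2) = 1 := by
      rw [mul_comm (l ^ 2) 2, pow_mul, ← mul_pow]; norm_num
    exact_mod_cast (by linear_combination hsq * 9 ^ (l ^ 2) + 4 ^ m * this :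
      (((A - A') ^ 2 + (B - B') ^ 2 : ℤ) : ℝ) * (10 ^ 4 * 9 ^ (l ^ 2)) = 4 ^ m)
  have h5 : (5 : ℤ) ∣ 4 ^ m := key ▸ Dvd.dvd.mul_left (Dvd.dvd.mul_right (by norm_num) _) _
  have := (Int.prime_iff_natAbs_prime.2 (by norm_num) : Prime (5 : ℤ)).dvd_of_dvd_pow h5
  norm_num at this

def gridInterval (j : ℕ) (t s : ℝ) : Finset ℤ := Finset.Icc ⌈(t - s) * 2 ^ j⌉ ⌊(t + s) * 2 ^ j⌋

theorem mem_gridInterval {j : ℕ} {t s : ℝ} {a : ℤ} (h : |t - a / 2 ^ j| ≤ s) :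
    a ∈ gridInterval j t s := by
  obtain ⟨h₁, h₂⟩ := abs_le.1 h
  rw [gridInterval, Finset.mem_Icc, Int.ceil_le, Int.le_floor, ← le_div_iff₀ (by positivity),
    ← div_le_iff₀ (by positivity)]
  constructor <;> linarith

theorem card_gridInterval_le (j : ℕ) (t : ℝ) {s : ℝ} (hs : 0 ≤ s) :
    ((gridInterval j t s).card : ℝ) ≤ 2 * s * 2 ^ j + 1 := by
  rw [gridInterval, Int.card_Icc, ← Int.cast_natCast, Int.toNat_eq_max, Int.cast_max]
  have h₁ := Int.floor_le ((t + s) * 2 ^ j)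
  have h₂ := Int.le_ceil ((t - s) * 2 ^ j)
  refine max_le ?_ (by rw [Int.cast_zero]; positivity)
  push_cast
  linarith

def gridBox (j : ℕ) (x : E2) (s : ℝ) : Finset (ℤ × ℤ) :=
  gridInterval j (x 0) s ×ˢ gridInterval j (x 1) s

theorem mem_gridBox {j : ℕ} {x : E2} {s : ℝ} {a b : ℤ} (h : dist x (ctr j a b) ≤ s) :
    (a, b) ∈ gridBox j x s :=
  Finset.mem_product.2 ⟨mem_gridInterval ((abs_sub_apply_le_dist x _ 0).trans h),
    mem_gridInterval ((abs_sub_apply_le_dist x _ 1).trans h)⟩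

theorem card_gridBox_le (j : ℕ) (x : E2) {s : ℝ} (hs : 0 ≤ s) :
    ((gridBox j x s).card : ℝ) ≤ (2 * s * 2 ^ j + 1) ^ 2 := by
  rw [gridBox, Finset.card_product, Nat.cast_mul, sq]
  exact mul_le_mul (card_gridInterval_le j _ hs) (card_gridInterval_le j _ hs) (by positivity)
    (by positivity)

theorem volume_biUnion_gridBox_le (j : ℕ) (x : E2) {s r : ℝ} (hs : 0 ≤ s) (hr : 0 ≤ r) :
    volume (⋃ p ∈ gridBox j x s, ball (ctr j p.1 p.2) r)
      ≤ ENNReal.ofReal ((2 * s * 2 ^ j + 1) ^ 2 * (π * r ^ 2)) :=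
  calc volume (⋃ p ∈ gridBox j x s, ball (ctr j p.1 p.2) r)
      ≤ ∑ p ∈ gridBox j x s, volume (ball (ctr j p.1 p.2) r) := measure_biUnion_finset_le _ _
    _ = ENNReal.ofReal ((gridBox j x s).card * (π * r ^ 2)) := by
        simp only [volume_ball_eq _ hr, Finset.sum_const, nsmul_eq_mul]
        rw [ENNReal.ofReal_mul (Nat.cast_nonneg _), ENNReal.ofReal_natCast]
    _ ≤ _ := by gcongr; exact card_gridBox_le j x hs

def center (i : ℕ × ℤ × ℤ) : E2 := ctr i.1 i.2.1 i.2.2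

def ballIdx (x : E2) : Set (ℕ × ℤ × ℤ) := {i | dist x (center i) < rad i.1}

/-- `ncard` is `0` on infinite sets; these only occur off `goodSet`. -/
def oddSet : Set E2 := {x | Odd (ballIdx x).ncard}

def clearance (j : ℕ) : ℝ := (1 / 8) ^ j

def goodSet : Set E2 :=
  {x | (∀ i, dist x (center i) ≠ rad i.1) ∧
    ∀ᶠ j in atTop, ∀ a b : ℤ, clearance j ≤ dist x (ctr j a b)}

theorem rad_lt_clearance (j : ℕ) : rad j < clearance j := by
  have h8 : (8 : ℝ) ^ j * clearance j = 1 := by rw [clearance, ← mul_pow]; norm_num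
  have hpos : 0 < clearance j := by unfold clearance; positivity
  calc rad j = rad j * 8 ^ j * clearance j := by rw [mul_assoc, h8, mul_one]
    _ ≤ 3 / 100 * clearance j := by gcongr; exact rad_mul_eight_pow_le j
    _ < clearance j := by linarith

theorem finite_setOf_fst_lt_dist_le (x : E2) (m : ℕ) (R : ℝ) :
    {i : ℕ × ℤ × ℤ | i.1 < m ∧ dist x (center i) ≤ R}.Finite := by
  refine ((Set.finite_Iio m).biUnion fun l _ =>
    (gridBox l x R).finite_toSet.image fun p => (l, p)).subset ?_
  rintro ⟨l, a, b⟩ ⟨hl, hd⟩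
  exact mem_biUnion (x := l) hl ⟨(a, b), mem_gridBox hd, rfl⟩

theorem exists_pos_le_abs_dist_sub_rad {x : E2} (hx : ∀ i, dist x (center i) ≠ rad i.1) (m : ℕ) :
    ∃ g > 0, ∀ i : ℕ × ℤ × ℤ, i.1 < m → g ≤ |dist x (center i) - rad i.1| := by
  have hnear : ∀ᶠ g in 𝓝[>] (0 : ℝ), ∀ i ∈ {i : ℕ × ℤ × ℤ | i.1 < m ∧ dist x (center i) ≤ 1},
      g ≤ |dist x (center i) - rad i.1| :=
    (finite_setOf_fst_lt_dist_le x m 1).eventually_all.2 fun i _ =>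
      eventually_nhdsWithin_of_eventually_nhds
        (eventually_le_nhds (abs_pos.2 (sub_ne_zero.2 (hx i))))
  obtain ⟨g, hg, hgpos, hg2⟩ :=
    (hnear.and (Ioo_mem_nhdsGT (by norm_num : (0 : ℝ) < 1 / 2))).exists
  refine ⟨g, hgpos, fun i hi => ?_⟩
  by_cases hd : dist x (center i) ≤ 1
  · exact hg i ⟨hi, hd⟩
  · have := rad_le_one_div_hundred i.1
    rw [abs_of_pos (by linarith)]
    linarith

theorem ballIdx_finite {x : E2} (hx : x ∈ goodSet) : (ballIdx x).Finite := by
  obtain ⟨m, hm⟩ := eventually_atTop.1 hx.2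
  refine (finite_setOf_fst_lt_dist_le x m 1).subset fun i (hi : dist x (center i) < rad i.1) => ?_
  refine ⟨lt_of_not_ge fun hle => ?_, hi.le.trans (rad_le_one_div_hundred _ |>.trans (by norm_num))⟩
  exact (hm i.1 hle i.2.1 i.2.2).not_gt (hi.trans (rad_lt_clearance i.1))

theorem volume_setOf_frequently_dist_ctr_lt :
    volume {x : E2 | ∃ᶠ j in atTop, ∃ a b : ℤ, dist x (ctr j a b) < clearance j} = 0 := by
  set near : ℕ → ℕ → Set E2 := fun R j =>
    ⋃ p ∈ gridBox j 0 (R + 1), ball (ctr j p.1 p.2) (clearance j)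
  have hcover : {x : E2 | ∃ᶠ j in atTop, ∃ a b : ℤ, dist x (ctr j a b) < clearance j} ⊆
      ⋃ R : ℕ, limsup (near R) atTop := by
    intro x hx
    obtain ⟨R, hR⟩ := exists_nat_gt (dist 0 x)
    refine mem_iUnion.2 ⟨R, mem_limsup_iff_frequently_mem.2 (hx.mono ?_)⟩
    rintro j ⟨a, b, hab⟩
    refine mem_biUnion (mem_gridBox ?_) hab
    have : clearance j ≤ 1 := pow_le_one₀ (by norm_num) (by norm_num)
    linarith [dist_triangle (0 : E2) x (ctr j a b)]
  refine measure_mono_null hcover (measure_iUnion_null fun R => measure_limsup_atTop_eq_zero ?_)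
  refine ne_top_of_le_ne_top ((summable_geometric_of_lt_one (by norm_num)
    (by norm_num : (1 / 16 : ℝ) < 1)).mul_left ((2 * R + 3) ^ 2 * π)).tsum_ofReal_ne_top
    (ENNReal.tsum_le_tsum fun j => (volume_biUnion_gridBox_le j 0 (by positivity)
      (by unfold clearance; positivity)).trans (ENNReal.ofReal_le_ofReal ?_))
  have h2 : (1 : ℝ) ≤ 2 ^ j := one_le_pow₀ (by norm_num)
  calc (2 * ((R : ℝ) + 1) * 2 ^ j + 1) ^ 2 * (π * clearance j ^ 2)
      ≤ ((2 * R + 3) * 2 ^ j) ^ 2 * (π * clearance j ^ 2) := by gcongr; nlinarith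
    _ = (2 * R + 3) ^ 2 * π * (2 ^ j * (1 / 8) ^ j) ^ 2 := by rw [clearance]; ring
    _ = (2 * R + 3) ^ 2 * π * (1 / 16) ^ j := by
        rw [← mul_pow, ← pow_mul, mul_comm j 2, pow_mul]; norm_num

theorem volume_compl_goodSet : volume (univ \ goodSet) = 0 := by
  have hsub : univ \ goodSet ⊆ (⋃ i : ℕ × ℤ × ℤ, sphere (center i) (rad i.1)) ∪
      {x : E2 | ∃ᶠ j in atTop, ∃ a b : ℤ, dist x (ctr j a b) < clearance j} := by
    rintro x ⟨-, hx⟩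
    simp only [goodSet, mem_ofPred_eq, not_and_or, not_forall, not_not, Filter.not_eventually,
      not_le] at hx
    rcases hx with ⟨i, hi⟩ | hx
    · exact Or.inl (mem_iUnion.2 ⟨i, hi⟩)
    · exact Or.inr hx
  exact measure_mono_null hsub (measure_union_null
    (measure_iUnion_null fun i => Measure.addHaar_sphere _ _ _) volume_setOf_frequently_dist_ctr_lt)

def arc (x : E2) (i : ℕ × ℤ × ℤ) : Set E2 :=
  sphere 0 1 ∩ closedBall (normalize (center i - x)) (2 * rad i.1 * 8 ^ i.1)

def badDirs (x : E2) (j : ℕ) : Set E2 := ⋃ p ∈ gridBox j x 1, arc x (j, p)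

theorem hausdorffMeasure_arc_le (x : E2) (i : ℕ × ℤ × ℤ) :
    μH[1] (arc x i) ≤ ENNReal.ofReal (8 * (rad i.1 * 8 ^ i.1)) := by
  have hw : 2 * rad i.1 * 8 ^ i.1 ≤ 1 / 2 := by linarith [rad_mul_eight_pow_le i.1]
  rcases eq_or_ne (center i) x with h | h
  · have : arc x i = ∅ := by
      refine eq_empty_of_forall_notMem fun u ⟨hu, hw'⟩ => ?_
      rw [h, sub_self, NormedSpace.normalize_zero_eq_zero, mem_closedBall, mem_sphere.1 hu] at hw'
      linarith
    simp [this]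
  · refine (hausdorffMeasure_sphere_inter_closedBall_le
      (NormedSpace.norm_normalize_eq_one_iff.2 (sub_ne_zero.2 h)) hw).trans_eq ?_
    congr 1
    ring

theorem hausdorffMeasure_badDirs_le (x : E2) (j : ℕ) :
    μH[1] (badDirs x j) ≤ ENNReal.ofReal (72 * (32 ^ j * rad j)) :=
  calc μH[1] (badDirs x j) ≤ ∑ p ∈ gridBox j x 1, μH[1] (arc x (j, p)) :=
        measure_biUnion_finset_le _ _
    _ ≤ ∑ p ∈ gridBox j x 1, ENNReal.ofReal (8 * (rad j * 8 ^ j)) :=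
        Finset.sum_le_sum fun p _ => hausdorffMeasure_arc_le x (j, p)
    _ = ENNReal.ofReal ((gridBox j x 1).card * (8 * (rad j * 8 ^ j))) := by
        rw [Finset.sum_const, nsmul_eq_mul, ENNReal.ofReal_mul (Nat.cast_nonneg _),
          ENNReal.ofReal_natCast]
    _ ≤ ENNReal.ofReal (72 * (32 ^ j * rad j)) := by
        refine ENNReal.ofReal_le_ofReal ?_
        have hcard := card_gridBox_le j x zero_le_one
        have h2 : (1 : ℝ) ≤ 2 ^ j := one_le_pow₀ (by norm_num)
        have h32 : (32 : ℝ) ^ j = (2 ^ j) ^ 2 * 8 ^ j := by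
          rw [show (32 : ℝ) = 2 ^ 2 * 8 by norm_num, mul_pow, ← pow_mul, ← pow_mul, mul_comm 2 j]
        rw [h32]
        have := rad_pos j
        calc (gridBox j x 1).card * (8 * (rad j * 8 ^ j))
            ≤ (2 * 1 * 2 ^ j + 1) ^ 2 * (8 * (rad j * 8 ^ j)) := by gcongr
          _ ≤ (3 * 2 ^ j) ^ 2 * (8 * (rad j * 8 ^ j)) := by gcongr; linarith
          _ = 72 * ((2 ^ j) ^ 2 * 8 ^ j * rad j) := by ring

theorem mem_arc_of_dist_add_smul_lt {x u : E2} (hu : ‖u‖ = 1) {h : ℝ} (hh : 0 < h)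
    {i : ℕ × ℤ × ℤ} (hfar : clearance i.1 ≤ dist x (center i))
    (hhit : dist (x + h • u) (center i) < rad i.1) : u ∈ arc x i := by
  have hd : 0 < dist x (center i) := (pow_pos (by norm_num) _).trans_le hfar
  refine ⟨mem_sphere_zero_iff_norm.2 hu, mem_closedBall.2 ?_⟩
  have hnorm : normalize (h • u) = u := by
    rw [NormedSpace.normalize_smul_of_pos hh, NormedSpace.normalize_eq_self_of_norm_eq_one hu]
  have hdist : ‖h • u - (center i - x)‖ = dist (x + h • u) (center i) := by
    rw [dist_eq_norm]; congr 1; abel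
  rw [dist_eq_norm, ← hnorm]
  refine (norm_normalize_sub_normalize_le _ (sub_ne_zero.2 (dist_pos.1 hd).symm)).trans ?_
  rw [hdist, ← dist_eq_norm, dist_comm (center i) x, div_le_iff₀ hd]
  have h8 : (8 : ℝ) ^ i.1 * clearance i.1 = 1 := by rw [clearance, ← mul_pow]; norm_num
  calc 2 * dist (x + h • u) (center i) ≤ 2 * rad i.1 := by linarith
    _ = 2 * rad i.1 * 8 ^ i.1 * clearance i.1 := by rw [mul_assoc _ (8 ^ i.1), h8, mul_one]
    _ ≤ 2 * rad i.1 * 8 ^ i.1 * dist x (center i) := by have := rad_pos i.1; gcongr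

theorem eventually_ballIdx_add_smul_eq {x u : E2} (hx : x ∈ goodSet) (hu : ‖u‖ = 1)
    (hdir : ∀ᶠ j in atTop, u ∉ badDirs x j) :
    ∀ᶠ h in 𝓝[>] (0 : ℝ), ballIdx (x + h • u) = ballIdx x := by
  obtain ⟨m, hm⟩ := eventually_atTop.1 (hdir.and hx.2)
  obtain ⟨g, hg, hgap⟩ := exists_pos_le_abs_dist_sub_rad hx.1 m
  filter_upwards [Ioo_mem_nhdsGT (lt_min hg (by norm_num : (0 : ℝ) < 1 / 2))] with h ⟨hh0, hh⟩
  have hstep : dist (x + h • u) x = h := by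
    rw [dist_eq_norm, add_sub_cancel_left, norm_smul, hu, Real.norm_of_nonneg hh0.le, mul_one]
  ext ⟨j, a, b⟩
  rcases lt_or_ge j m with hj | hj
  · refine mem_ball_iff_of_dist_lt_abs_sub ?_
    rw [hstep]
    exact hh.trans_le ((min_le_left _ _).trans (hgap (j, a, b) hj))
  · obtain ⟨hnotbad, hfar⟩ := hm j hj
    refine iff_of_false (fun hy => hnotbad (mem_biUnion (mem_gridBox ?_)
      (mem_arc_of_dist_add_smul_lt hu hh0 (hfar a b) hy))) fun hx' =>
      (hfar a b).not_gt (lt_trans hx' (rad_lt_clearance j))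
    change dist x (center (j, a, b)) ≤ 1
    have := rad_le_one_div_hundred j
    have := dist_triangle x (x + h • u) (center (j, a, b))
    rw [dist_comm x (x + h • u), hstep] at this
    have := min_le_right g (1 / 2 : ℝ)
    change dist (x + h • u) (center (j, a, b)) < rad j at hy
    linarith

theorem diffAEDirs_of_mem_goodSet {x : E2} (hx : x ∈ goodSet) :
    DiffAEDirs (oddSet.indicator fun _ => (1 : ℝ)) x := by
  refine measure_mono_null (fun u ⟨hu, hbad⟩ => ?_) (measure_limsup_atTop_eq_zero
    (ne_top_of_le_ne_top (summable_thirtyTwo_pow_mul_rad.mul_left 72).tsum_ofReal_ne_top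
      (ENNReal.tsum_le_tsum (hausdorffMeasure_badDirs_le x))))
  refine mem_limsup_iff_frequently_mem.2 fun hgood => hbad (diffAtInDir_of_eventually_eq ?_)
  filter_upwards [eventually_ballIdx_add_smul_eq hx (mem_sphere_zero_iff_norm.1 hu) hgood]
    with h hh
  have hmem : x + h • u ∈ oddSet ↔ x ∈ oddSet := by simp only [oddSet, mem_ofPred_eq, hh]
  by_cases hxo : x ∈ oddSet <;> simp [hxo, hmem]

def tinyBalls (c : E2) (ρ : ℝ) : Set E2 :=
  ⋃ l, ⋃ (_ : (1 / 2 : ℝ) ^ l < 2 * ρ), ⋃ p ∈ gridBox l c (2 * ρ), ball (ctr l p.1 p.2) (rad l)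

theorem volume_tinyBalls_le (c : E2) {ρ : ℝ} (hρ : 0 ≤ ρ) :
    volume (tinyBalls c ρ) ≤ ENNReal.ofReal (π * ρ ^ 2 / 100) := by
  have hlevel : ∀ l, volume (⋃ (_ : (1 / 2 : ℝ) ^ l < 2 * ρ),
      ⋃ p ∈ gridBox l c (2 * ρ), ball (ctr l p.1 p.2) (rad l))
        ≤ ENNReal.ofReal (36 * π * ρ ^ 2 / 10 ^ 4 * (4 / 9) ^ l) := by
    intro l
    by_cases hl : (1 / 2 : ℝ) ^ l < 2 * ρ
    · simp only [hl, iUnion_true]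
      refine (volume_biUnion_gridBox_le l c (by positivity) (rad_pos l).le).trans
        (ENNReal.ofReal_le_ofReal ?_)
      have h1 : 1 < 2 * ρ * 2 ^ l := by
        rwa [one_div_pow, div_lt_iff₀ (by positivity)] at hl
      have h4 : (4 : ℝ) ^ l = (2 ^ l) ^ 2 := by rw [← pow_mul, mul_comm, pow_mul]; norm_num
      calc (2 * (2 * ρ) * 2 ^ l + 1) ^ 2 * (π * rad l ^ 2)
          ≤ (6 * ρ * 2 ^ l) ^ 2 * (π * rad l ^ 2) := by gcongr; linarith
        _ = 36 * π * ρ ^ 2 * (4 ^ l * rad l ^ 2) := by rw [h4]; ring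
        _ ≤ 36 * π * ρ ^ 2 * ((4 / 9) ^ l / 10 ^ 4) := by gcongr; exact four_pow_mul_rad_sq_le l
        _ = 36 * π * ρ ^ 2 / 10 ^ 4 * (4 / 9) ^ l := by ring
    · rw [iUnion_eq_empty.2 fun h => absurd h hl, measure_empty]
      exact zero_le
  have hgeom : Summable fun l : ℕ => 36 * π * ρ ^ 2 / 10 ^ 4 * (4 / 9 : ℝ) ^ l :=
    (summable_geometric_of_lt_one (by norm_num) (by norm_num)).mul_left _
  calc volume (tinyBalls c ρ)
      ≤ ∑' l, ENNReal.ofReal (36 * π * ρ ^ 2 / 10 ^ 4 * (4 / 9) ^ l) :=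
        (measure_iUnion_le _).trans (ENNReal.tsum_le_tsum hlevel)
    _ = ENNReal.ofReal (36 * π * ρ ^ 2 / 10 ^ 4 * (1 - 4 / 9)⁻¹) := by
        rw [← ENNReal.ofReal_tsum_of_nonneg (fun l => by positivity) hgeom, tsum_mul_left,
          tsum_geometric_of_lt_one (by norm_num) (by norm_num)]
    _ ≤ ENNReal.ofReal (π * ρ ^ 2 / 100) := by
        refine ENNReal.ofReal_le_ofReal ?_
        have : 0 ≤ π * ρ ^ 2 := by positivity
        norm_num
        linarith

theorem exists_mem_goodSet_annulus (c x : E2) (J : ℕ) :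
    ∃ y ∈ goodSet, y ≠ x ∧ rad (J + 1) < dist y c ∧ dist y c < rad J ∧
      y ∉ tinyBalls c (rad J) := by
  set U := closedBall c (rad (J + 1)) ∪ tinyBalls c (rad J) ∪ ({x} ∪ (univ \ goodSet))
  have hU : volume U < volume (ball c (rad J)) := by
    have hsucc := rad_succ_le J
    have hpos := rad_pos (J + 1)
    calc volume U ≤ volume (closedBall c (rad (J + 1))) + volume (tinyBalls c (rad J)) + 0 := by
          refine (measure_union_le _ _).trans (add_le_add (measure_union_le _ _) ?_)
          exact (measure_union_le _ _).trans_eq (by rw [measure_singleton, volume_compl_goodSet,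
            add_zero])
      _ ≤ ENNReal.ofReal (π * rad (J + 1) ^ 2) + ENNReal.ofReal (π * rad J ^ 2 / 100) + 0 := by
          rw [Measure.addHaar_closedBall_eq_addHaar_ball, volume_ball_eq _ hpos.le]
          gcongr
          exact volume_tinyBalls_le c (rad_pos J).le
      _ < ENNReal.ofReal (π * rad J ^ 2) := by
          rw [add_zero, ← ENNReal.ofReal_add (by positivity) (by positivity),
            ENNReal.ofReal_lt_ofReal_iff (by have := rad_pos J; positivity)]
          have : 0 < rad J ^ 2 - rad (J + 1) ^ 2 - rad J ^ 2 / 100 := by nlinarith [rad_pos J]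
          nlinarith [mul_pos Real.pi_pos this]
      _ = volume (ball c (rad J)) := (volume_ball_eq c (rad_pos J).le).symm
  obtain ⟨y, hyb, hyU⟩ := nonempty_of_measure_ne_zero
    ((tsub_pos_of_lt hU).trans_le le_measure_sdiff).ne'
  simp only [U, mem_union, mem_closedBall, mem_singleton_iff, Set.mem_sdiff, mem_univ, true_and,
    not_or, not_le, not_not] at hyU
  exact ⟨y, hyU.2.2, hyU.2.1, hyU.1.1, hyb, hyU.1.2⟩

/-- Coarse spheres stay a gap away from `c`; a finer ball not centred at `c` misses `c`, and it
can reach `y` only if it is one of the tiny balls. -/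
theorem mem_ballIdx_iff_of_dist_ctr_lt {k : ℕ} {a b : ℤ} {g ρ : ℝ}
    (hgap : ∀ i : ℕ × ℤ × ℤ, i.1 < k + 1 → g ≤ |dist (ctr k a b) (center i) - rad i.1|)
    (hρg : ρ ≤ g) {y : E2} (hy : dist y (ctr k a b) < ρ) (hyT : y ∉ tinyBalls (ctr k a b) ρ)
    (i : ℕ × ℤ × ℤ) :
    i ∈ ballIdx y ↔ (center i ≠ ctr k a b ∧ i ∈ ballIdx (ctr k a b)) ∨
      (center i = ctr k a b ∧ dist y (ctr k a b) < rad i.1) := by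
  by_cases hci : center i = ctr k a b
  · simp [ballIdx, hci]
  simp only [hci, ne_eq, not_false_eq_true, true_and, false_and, or_false]
  rcases lt_or_ge i.1 (k + 1) with hi | hi
  · exact mem_ball_iff_of_dist_lt_abs_sub (hy.trans_le (hρg.trans (hgap i hi)))
  obtain ⟨l, a', b'⟩ := i
  have hsep : (1 / 2) ^ l ≤ dist (ctr k a b) (center (l, a', b')) := by
    have := half_pow_le_dist_ctr (l := l) (a' := a') (b' := b') (Ne.symm hci)
    rwa [max_eq_right (by simp only at hi; omega)] at this
  have hrad := rad_le_half_pow l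
  have hpow : 0 < (1 / 2 : ℝ) ^ l := by positivity
  refine iff_of_false (fun hyl => hyT ?_) fun hcl => ?_
  · change dist y (center (l, a', b')) < rad l at hyl
    have htri := dist_triangle (ctr k a b) y (center (l, a', b'))
    rw [dist_comm] at hy
    refine mem_iUnion.2 ⟨l, mem_iUnion.2 ⟨by linarith, mem_biUnion (mem_gridBox ?_) hyl⟩⟩
    change dist (ctr k a b) (center (l, a', b')) ≤ 2 * ρ
    linarith
  · change dist (ctr k a b) (center (l, a', b')) < rad l at hcl
    linarith

theorem ballIdx_eq_of_mem_annulus {k J : ℕ} {a b : ℤ} {g : ℝ}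
    (hgap : ∀ i : ℕ × ℤ × ℤ, i.1 < k + 1 → g ≤ |dist (ctr k a b) (center i) - rad i.1|)
    (hJg : rad J ≤ g) {y : E2} (hy₁ : rad (J + 1) < dist y (ctr k a b))
    (hy₂ : dist y (ctr k a b) < rad J) (hyT : y ∉ tinyBalls (ctr k a b) (rad J)) :
    ballIdx y = {i | center i ≠ ctr k a b ∧ i ∈ ballIdx (ctr k a b)} ∪
      {i | center i = ctr k a b ∧ i.1 ≤ J} := by
  ext i
  rw [mem_ballIdx_iff_of_dist_ctr_lt hgap hJg hy₂ hyT]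
  refine or_congr Iff.rfl (and_congr_right fun _ => ⟨fun h => ?_, fun h => ?_⟩)
  · by_contra hJ
    exact (rad_strictAnti.antitone (not_le.1 hJ)).not_gt (h.trans' hy₁)
  · exact hy₂.trans_le (rad_strictAnti.antitone h)

theorem setOf_center_eq_fst_le_succ {k J : ℕ} (hk : k ≤ J + 1) (a b : ℤ) :
    {i : ℕ × ℤ × ℤ | center i = ctr k a b ∧ i.1 ≤ J + 1} =
      insert (J + 1, a * 2 ^ (J + 1 - k), b * 2 ^ (J + 1 - k))
        {i | center i = ctr k a b ∧ i.1 ≤ J} := by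
  ext ⟨l, a', b'⟩
  simp only [mem_insert_iff, mem_ofPred_eq, Prod.mk.injEq]
  constructor
  · rintro ⟨hc, hl⟩
    rcases hl.lt_or_eq with hl | rfl
    · exact Or.inr ⟨hc, by omega⟩
    · rw [center, ← ctr_lift hk, ctr_inj] at hc
      exact Or.inl ⟨rfl, hc⟩
  · rintro (⟨rfl, rfl, rfl⟩ | ⟨hc, hl⟩)
    · exact ⟨ctr_lift hk a b, le_rfl⟩
    · exact ⟨hc, by omega⟩

theorem exists_mem_goodSet_near_mem_oddSet_iff (x : E2) {δ : ℝ} (hδ : 0 < δ) :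
    ∃ y ∈ goodSet, y ≠ x ∧ dist y x < δ ∧ (y ∈ oddSet ↔ x ∉ oddSet) := by
  obtain ⟨k, a, b, hxc⟩ := exists_dist_ctr_lt x (half_pos hδ)
  set c := ctr k a b
  obtain ⟨g, hg, hgap⟩ :=
    exists_pos_le_abs_dist_sub_rad (x := c) (fun i => dist_ctr_ne_rad k i.1 a b i.2.1 i.2.2) (k + 1)
  obtain ⟨n, hn⟩ :=
    exists_pow_lt_of_lt_one (lt_min hg (half_pos hδ)) (by norm_num : (1 / 2 : ℝ) < 1)
  set J := max k n
  have hJ : rad J < min g (δ / 2) := by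
    have := rad_le_half_pow n
    have := rad_strictAnti.antitone (le_max_right k n)
    have : 0 < (1 / 2 : ℝ) ^ n := by positivity
    linarith
  have hJ₁ : rad (J + 1) < rad J := rad_strictAnti (Nat.lt_succ_self J)
  obtain ⟨y, hyE, hyx, hy₁, hy₂, hyT⟩ := exists_mem_goodSet_annulus c x J
  obtain ⟨y', hyE', hyx', hy₁', hy₂', hyT'⟩ := exists_mem_goodSet_annulus c x (J + 1)
  have hflip : y' ∈ oddSet ↔ y ∉ oddSet := by
    have hball := ballIdx_eq_of_mem_annulus hgap (hJ.le.trans (min_le_left _ _)) hy₁ hy₂ hyT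
    have hball' := ballIdx_eq_of_mem_annulus hgap (hJ₁.le.trans (hJ.le.trans (min_le_left _ _)))
      hy₁' hy₂' hyT'
    rw [setOf_center_eq_fst_le_succ (by omega), union_insert, ← hball] at hball'
    have hnew : (J + 1, a * 2 ^ (J + 1 - k), b * 2 ^ (J + 1 - k)) ∉ ballIdx y := by
      rw [hball]
      rintro (⟨hne, -⟩ | ⟨-, hle⟩)
      · exact hne (ctr_lift (by omega) a b)
      · exact Nat.not_succ_le_self J hle
    simp only [oddSet, mem_ofPred_eq, hball', ncard_insert_of_notMem hnew (ballIdx_finite hyE),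
      Nat.odd_add_one]
  have hclose : ∀ z, dist z c < rad J → dist z x < δ := fun z hz => by
    linarith [dist_triangle z c x, dist_comm x c, min_le_right g (δ / 2)]
  by_cases hy : y ∈ oddSet ↔ x ∉ oddSet
  · exact ⟨y, hyE, hyx, hclose y hy₂, hy⟩
  · exact ⟨y', hyE', hyx', hclose y' (hy₂'.trans hJ₁), by tauto⟩

end DyadicBalls

/-- There are sets `Z, E ⊆ ℝ²` with `|ℝ² \ E| = 0` such that `χ_Z` is differentiable in almost
every direction at every point of `E`, yet `χ_Z` is nowhere Lipschitz relative to `E`. -/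
theorem stmt2 : ∃ Z E : Set E2,
    volume (Set.univ \ E) = 0 ∧
    (∀ x ∈ E, DiffAEDirs (Set.indicator Z (fun _ => (1 : ℝ))) x) ∧
    (∀ x : E2, ¬ LipAtRel (Set.indicator Z (fun _ => (1 : ℝ))) x E) :=
  ⟨DyadicBalls.oddSet, DyadicBalls.goodSet, DyadicBalls.volume_compl_goodSet,
    fun _ hx => DyadicBalls.diffAEDirs_of_mem_goodSet hx, fun x =>
    DyadicBalls.not_lipAtRel_indicator fun _ hδ =>
      DyadicBalls.exists_mem_goodSet_near_mem_oddSet_iff x hδ⟩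
end
end

section
/- Let f : ℝ² → ℝ and let E = {x ∈ ℝ² : f is Lipschitz at x in residually many directions}. Then for every x ∈ E there exist v ∈ S¹, δ > 0 and r > 0 such that f is Lipschitz at x relative to E ∩ C(x,v,δ,r), where C(x,v,δ,r) is the open circular sector with vertex x, axis v, opening parameter δ and radius r. -/
open Metric MeasureTheory Filter Set

noncomputable section

/-- `f` is Lipschitz at `x` in direction `u`:
`limsup_{h→0+} |f(x+hu)−f(x)|/h < ∞`, i.e. the quotient is eventually bounded above. -/
def LipAtInDir (f : E2 → ℝ) (x u : E2) : Prop :=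
  Filter.IsBoundedUnder (· ≤ ·) (nhdsWithin (0 : ℝ) (Set.Ioi 0))
    (fun h : ℝ => |f (x + h • u) - f x| / h)

/-- `f` is Lipschitz at `x` in residually many directions: the set of unit directions in which
it fails to be Lipschitz at `x` is of the first Baire category in the unit circle. -/
def LipResidualDirs (f : E2 → ℝ) (x : E2) : Prop :=
  IsMeagre {u : (Metric.sphere (0 : E2) 1) | ¬ LipAtInDir f x (u : E2)}

/-- The open circular sector with vertex `x`, axis `v`, opening parameter `δ` and radius `r`. -/
def Sector (x v : E2) (δ r : ℝ) : Set E2 :=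
  {y | y ≠ x ∧ ‖‖y - x‖⁻¹ • (y - x) - v‖ < δ} ∩ Metric.ball x r


def cross (a b : E2) : ℝ := a 0 * b 1 - a 1 * b 0

def rot (z : E2) : E2 := (WithLp.equiv 2 (Fin 2 → ℝ)).symm ![-z 1, z 0]

@[simp] lemma rot_apply0 (z : E2) : rot z 0 = -z 1 := rfl
@[simp] lemma rot_apply1 (z : E2) : rot z 1 = z 0 := rfl

lemma norm_sq_e2 (z : E2) : ‖z‖^2 = (z 0)^2 + (z 1)^2 := by
  rw [EuclideanSpace.norm_eq, Real.sq_sqrt (by positivity)]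
  simp [Fin.sum_univ_two, sq_abs]

lemma le_of_sq_le' {x y : ℝ} (hx : 0 ≤ x) (h : x^2 ≤ y^2) (hy : 0 ≤ y) : x ≤ y := by
  nlinarith

lemma cross_abs_le (a b : E2) : |cross a b| ≤ ‖a‖ * ‖b‖ := by
  have h1 := norm_sq_e2 a
  have h2 := norm_sq_e2 b
  have h3 : (cross a b)^2 ≤ (‖a‖*‖b‖)^2 := by
    rw [mul_pow, h1, h2]; unfold cross; nlinarith [sq_nonneg (a 0 * b 0 + a 1 * b 1)]
  have := abs_nonneg (cross a b)
  nlinarith [mul_nonneg (norm_nonneg a) (norm_nonneg b), sq_abs (cross a b)]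

lemma cross_sub_left (a a' b : E2) : cross a b - cross a' b = cross (a - a') b := by
  simp [cross, PiLp.sub_apply]; ring

lemma cross_sub_right (a b b' : E2) : cross a b - cross a b' = cross a (b - b') := by
  simp [cross, PiLp.sub_apply]; ring

lemma abs_cross_sub_left_le (a a' b : E2) (hb : ‖b‖ = 1) : |cross a b - cross a' b| ≤ ‖a - a'‖ := by
  rw [cross_sub_left]
  simpa [hb] using cross_abs_le (a - a') b

lemma abs_cross_sub_right_le (a b b' : E2) (ha : ‖a‖ = 1) : |cross a b - cross a b'| ≤ ‖b - b'‖ := by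
  rw [cross_sub_right]
  simpa [ha] using cross_abs_le a (b - b')

lemma cross_rot_self (w : E2) (hw : ‖w‖ = 1) : cross w (rot w) = 1 := by
  have := norm_sq_e2 w
  simp only [cross, rot_apply0, rot_apply1]
  nlinarith

lemma crossSelf (w : E2) : cross w w = 0 := by simp [cross]; ring

/-- combination : coordinates -/
lemma comb_apply0 (w : E2) (α β : ℝ) : (α • w + β • rot w) 0 = α * w 0 - β * w 1 := by
  simp [PiLp.add_apply, PiLp.smul_apply, smul_eq_mul]; ring
lemma comb_apply1 (w : E2) (α β : ℝ) : (α • w + β • rot w) 1 = α * w 1 + β * w 0 := by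
  simp [PiLp.add_apply, PiLp.smul_apply, smul_eq_mul]

lemma comb_norm (w : E2) (hw : ‖w‖ = 1) (α β : ℝ) (h : α^2 + β^2 = 1) :
    ‖α • w + β • rot w‖ = 1 := by
  have hw2 : w 0^2 + w 1^2 = 1 := by rw [← norm_sq_e2, hw]; norm_num
  have h2 : ‖α • w + β • rot w‖^2 = 1 := by
    rw [norm_sq_e2, comb_apply0, comb_apply1]; nlinarith
  nlinarith [norm_nonneg (α • w + β • rot w)]

lemma comb_sub_norm_sq (w : E2) (hw : ‖w‖ = 1) (α β : ℝ) :
    ‖(α • w + β • rot w) - w‖^2 = (α-1)^2 + β^2 := by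
  have hw2 : w 0^2 + w 1^2 = 1 := by rw [← norm_sq_e2, hw]; norm_num
  rw [norm_sq_e2]
  simp only [PiLp.sub_apply, comb_apply0, comb_apply1]
  nlinarith

lemma cross_comb_right (w : E2) (hw : ‖w‖ = 1) (α β : ℝ) :
    cross w (α • w + β • rot w) = β := by
  have hw2 : w 0^2 + w 1^2 = 1 := by rw [← norm_sq_e2, hw]; norm_num
  simp only [cross, comb_apply0, comb_apply1]
  linear_combination β * hw2

lemma lagrange (w v : E2) (hw : ‖w‖ = 1) (hv : ‖v‖ = 1) :
    (cross w v)^2 + (cross w (rot v))^2 = 1 := by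
  have h1 : w 0^2 + w 1^2 = 1 := by rw [← norm_sq_e2, hw]; norm_num
  have h2 : v 0^2 + v 1^2 = 1 := by rw [← norm_sq_e2, hv]; norm_num
  simp only [cross, rot_apply0, rot_apply1]
  nlinarith

def Bset (f : E2 → ℝ) (p : E2) (n : ℕ) : Set E2 :=
  {u | ‖u‖ = 1 ∧ ∀ h ∈ Ioc (0:ℝ) (1/(n+1)), |f (p + h • u) - f p| ≤ (n+1) * h}

lemma isMeagre_union {X : Type*} [TopologicalSpace X] {s t : Set X}
    (hs : IsMeagre s) (ht : IsMeagre t) : IsMeagre (s ∪ t) := by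
  rw [IsMeagre, compl_union]
  exact Filter.inter_mem hs ht

lemma lip_mem_iUnion_Bset (f : E2 → ℝ) (p : E2) (u : E2) (hnorm : ‖u‖ = 1)
    (hu : LipAtInDir f p u) : ∃ n : ℕ, u ∈ Bset f p n := by
  obtain ⟨K, hK⟩ := hu
  rw [Filter.eventually_map] at hK
  obtain ⟨h₀, h₀pos, hsub⟩ := mem_nhdsGT_iff_exists_Ioo_subset.mp hK
  obtain ⟨n, hn⟩ := exists_nat_gt (max K (1/h₀))
  have h₀pos : (0:ℝ) < h₀ := h₀pos
  have hstep : (n:ℝ) < (n:ℝ) + 1 := lt_add_one _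
  have hK' : K ≤ (n:ℝ) + 1 := (le_max_left K (1/h₀)).trans (hn.trans hstep).le
  have hn' : 1/h₀ < (n:ℝ) + 1 := (le_max_right K (1/h₀)).trans_lt (hn.trans hstep)
  have hnpos : (0:ℝ) < (n:ℝ) + 1 := by positivity
  refine ⟨n, hnorm, fun h hh => ?_⟩
  have hpos : 0 < h := hh.1
  have hlt : h < h₀ := lt_of_le_of_lt hh.2 ((one_div_lt h₀pos hnpos).mp hn')
  have := hsub ⟨hpos, hlt⟩
  rw [Set.mem_setOf_eq, div_le_iff₀ hpos] at this
  exact this.trans (mul_le_mul_of_nonneg_right hK' hpos.le)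

/-- dense-arc extraction at a point where directions are residually Lipschitz -/
lemma exists_dense_arc (f : E2 → ℝ) (p : E2) (hp : LipResidualDirs f p) :
    ∃ n : ℕ, ∃ v : E2, ‖v‖ = 1 ∧ ∃ δ > (0:ℝ),
      ∀ q : E2, ‖q‖ = 1 → ‖q - v‖ < δ → ∀ ε > (0:ℝ), ∃ u ∈ Bset f p n, ‖u - q‖ < ε := by
  classical
  have hpt : EuclideanSpace.single (0 : Fin 2) (1:ℝ) ∈ Metric.sphere (0:E2) 1 := by simp
  set S := Metric.sphere (0:E2) 1
  haveI : CompleteSpace S := (Metric.isClosed_sphere).completeSpace_coe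
  set B' : ℕ → Set S := fun n => {u : S | (u : E2) ∈ Bset f p n} with hB'
  -- some B' n is not meagre
  have hex : ∃ n, ¬ IsMeagre (B' n) := by
    by_contra hall
    push_neg at hall
    have hmeag : IsMeagre (⋃ n, B' n) := isMeagre_iUnion hall
    have huniv : IsMeagre (univ : Set S) := by
      have : (univ : Set S) ⊆ {u : S | ¬ LipAtInDir f p (u : E2)} ∪ ⋃ n, B' n := by
        intro u _
        by_cases hu : LipAtInDir f p (u : E2)
        · right
          obtain ⟨n, hn⟩ := lip_mem_iUnion_Bset f p u (mem_sphere_zero_iff_norm.mp u.2) hu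
          exact mem_iUnion.mpr ⟨n, hn⟩
        · exact Or.inl hu
      exact (isMeagre_union hp hmeag).mono this
    have hdense : Dense (∅ : Set S) := by
      have := huniv
      rw [IsMeagre, compl_univ] at this
      exact dense_of_mem_residual this
    have h1 : closure (∅ : Set S) = univ := hdense.closure_eq
    rw [closure_empty] at h1
    have hne : (univ : Set S).Nonempty :=
      ⟨⟨_, hpt⟩, mem_univ _⟩
    rw [← h1] at hne
    exact Set.not_nonempty_empty hne
  obtain ⟨n, hn⟩ := hex
  -- B' n is somewhere dense
  have hnwd : ¬ IsNowhereDense (B' n) := by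
    intro h
    exact hn (isMeagre_iff_countable_union_isNowhereDense.mpr
      ⟨{closure (B' n)}, by simpa using h.closure, countable_singleton _,
        by rw [sUnion_singleton]; exact subset_closure⟩)
  rw [IsNowhereDense] at hnwd
  obtain ⟨v₀, hv₀⟩ := nonempty_iff_ne_empty.mpr hnwd
  obtain ⟨δ, hδpos, hball⟩ := Metric.isOpen_iff.mp isOpen_interior v₀ hv₀
  refine ⟨n, (v₀ : E2), mem_sphere_zero_iff_norm.mp v₀.2, δ, hδpos, fun q hq hqv ε hε => ?_⟩
  have hqS : q ∈ S := mem_sphere_zero_iff_norm.mpr hq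
  have hqcl : (⟨q, hqS⟩ : S) ∈ closure (B' n) := by
    apply interior_subset
    apply hball
    rw [Metric.mem_ball, Subtype.dist_eq, dist_eq_norm]
    exact hqv
  rw [Metric.mem_closure_iff] at hqcl
  obtain ⟨u, hu, hdu⟩ := hqcl (ε) hε
  refine ⟨(u : E2), hu, ?_⟩
  rw [Subtype.dist_eq, dist_eq_norm] at hdu
  rw [norm_sub_rev]
  exact hdu

lemma cross_smul_add_right (a b c : E2) (α β : ℝ) :
    cross a (α • b + β • c) = α * cross a b + β * cross a c := by
  simp [cross, PiLp.add_apply, PiLp.smul_apply, smul_eq_mul]; ring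

lemma exists_u'_cross_ne (f : E2 → ℝ) (y w : E2) (hw : ‖w‖ = 1)
    (hy : LipResidualDirs f y) :
    ∃ m : ℕ, ∃ u' ∈ Bset f y m, cross w u' ≠ 0 := by
  obtain ⟨m, v', hv', δ', hδ', dense2⟩ := exists_dense_arc f y hy
  set C := cross w v' with hC
  by_cases hCne : C ≠ 0
  · obtain ⟨u', hu'B, hu'd⟩ := dense2 v' hv' (by simpa using hδ') (|C|/2)
      (by positivity)
    refine ⟨m, u', hu'B, fun h0 => ?_⟩
    have := abs_cross_sub_right_le w u' v' hw
    rw [h0, ← hC] at this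
    have : |C| ≤ ‖u' - v'‖ := by simpa [abs_sub_comm] using this
    have hCpos : 0 < |C| := abs_pos.mpr hCne
    linarith
  · push_neg at hCne
    set P := cross w (rot v') with hP
    have hP2 : P^2 = 1 := by
      have := lagrange w v' hw hv'
      rw [← hC, ← hP] at this; nlinarith
    set β := min (δ'/2) (1/2) with hβ
    have hβpos : 0 < β := by positivity
    have hβle : β ≤ 1/2 := min_le_right _ _
    have hβδ : β ≤ δ'/2 := min_le_left _ _
    set α := Real.sqrt (1 - β^2) with hα
    have hb2 : (0:ℝ) ≤ 1 - β^2 := by nlinarith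
    have hα2 : α^2 = 1 - β^2 := Real.sq_sqrt hb2
    have hαnn : 0 ≤ α := Real.sqrt_nonneg _
    have hα1 : 1 - α ≤ β^2 := by
      nlinarith [sq_nonneg (α - (1 - β^2)), sq_nonneg (α + (1 - β^2))]
    set q := α • v' + β • rot v' with hq
    have hqnorm : ‖q‖ = 1 := comb_norm v' hv' α β (by nlinarith)
    have hqv' : ‖q - v'‖ < δ' := by
      have h1 : ‖q - v'‖^2 = (α-1)^2 + β^2 := comb_sub_norm_sq v' hv' α β
      have h2 : ‖q - v'‖ ≤ 3*β/2 := by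
        apply le_of_sq_le' (norm_nonneg _) _ (by positivity)
        rw [h1]; nlinarith
      linarith
    have hcq : cross w q = β * P := by
      rw [hq, cross_smul_add_right, ← hC, ← hP, hCne]; ring
    obtain ⟨u', hu'B, hu'd⟩ := dense2 q hqnorm hqv' (β/2) (by positivity)
    refine ⟨m, u', hu'B, fun h0 => ?_⟩
    have := abs_cross_sub_right_le w u' q hw
    rw [h0, hcq] at this
    have habs : |β * P| ≤ ‖u' - q‖ := by simpa [abs_sub_comm] using this
    have : |β * P| = β := by
      rw [abs_mul, abs_of_pos hβpos]
      have : |P| = 1 := by nlinarith [sq_abs P, abs_nonneg P]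
      rw [this, mul_one]
    linarith [habs, hu'd, this.symm.le.trans habs]


lemma aux_sq_le_one {b : ℝ} (h0 : 0 ≤ b) (h1 : b ≤ 1) : 0 ≤ 1 - b^2 := by nlinarith

lemma aux_sqrt_lb {α b : ℝ} (hα2 : α^2 = 1-b^2) (hαnn : 0 ≤ α) (hb : 0 ≤ b) (hb1 : b ≤ 1) :
    1 - α ≤ b^2 := by
  nlinarith [sq_nonneg (α - (1-b^2)), sq_nonneg (α + (1-b^2))]

lemma aux_comb {α b σ : ℝ} (hα2 : α^2 = 1-b^2) (hσ2 : σ^2 = 1) : α^2 + (b*σ)^2 = 1 := by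
  linear_combination hα2 + b^2 * hσ2

lemma aux_alpha_le_one {α b : ℝ} (hα2 : α^2 = 1-b^2) (hαnn : 0 ≤ α) : α ≤ 1 := by
  nlinarith [sq_nonneg b]

lemma aux_u0w {α b σ : ℝ} (h1 : 1-α ≤ b^2) (h2 : α ≤ 1) (hσ2 : σ^2 = 1)
    (hb0 : 0 ≤ b) (hb1 : b ≤ 1) : (α-1)^2 + (b*σ)^2 ≤ (3*b/2)^2 := by
  have h3 : (0:ℝ) ≤ 1 - α := by linarith
  have h4 : (1-α)*(1-α) ≤ b^2 * b^2 := mul_self_le_mul_self h3 h1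
  have h6 : (b*σ)^2 = b^2 := by rw [mul_pow, hσ2, mul_one]
  have h5 : b^2 ≤ 1 := by nlinarith
  nlinarith [h4, h6, mul_le_mul_of_nonneg_left h5 (sq_nonneg b)]

lemma aux_pos_of_mul {s A B : ℝ} (h : s * A = B) (hA : 0 < A) (hB : 0 < B) : 0 < s := by
  nlinarith

lemma aux_s {s A c' t q b M : ℝ} (h1 : s*A = t*q) (hA1 : c'/2 ≤ A)
    (hq : q ≤ 3*b/2) (hs : 0 < s) (htp : 0 < t) (hb' : 3*M*b ≤ c')
    (hM : 0 < M) (hc' : 0 < c') : M * s ≤ t := by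
  have e1 : s*c' ≤ 3*t*b := by
    nlinarith [mul_le_mul_of_nonneg_left hA1 hs.le, mul_le_mul_of_nonneg_left hq htp.le]
  nlinarith [mul_le_mul_of_nonneg_left e1 hM.le, mul_le_mul_of_nonneg_left hb' htp.le]

lemma aux_tau {τ A c' t : ℝ} (h : τ*A = t*c') (hA : c'/2 ≤ A) (hτ : 0 < τ)
    (hc' : 0 < c') : τ ≤ 2*t := by
  nlinarith [mul_le_mul_of_nonneg_left hA hτ.le]

lemma aux_half {t M : ℝ} (h : t < 1/(2*M)) (hM : 0 < M) : 2*t ≤ 1/M := by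
  rw [lt_div_iff₀ (by positivity)] at h
  rw [le_div_iff₀ hM]
  nlinarith

lemma aux_le_inv {s t M : ℝ} (h : M*s ≤ t) (ht : t ≤ 1) (hM : 0 < M) : s ≤ 1/M := by
  rw [le_div_iff₀ hM]
  nlinarith

lemma cramer0 (u u' w : E2) (t : ℝ) (hD : cross u u' ≠ 0) :
    t * cross w u' / cross u u' * u 0 = t * w 0 + t * cross w u / cross u u' * u' 0 := by
  field_simp
  simp only [cross]
  ring

lemma cramer1 (u u' w : E2) (t : ℝ) (hD : cross u u' ≠ 0) :
    t * cross w u' / cross u u' * u 1 = t * w 1 + t * cross w u / cross u u' * u' 1 := by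
  field_simp
  simp only [cross]
  ring

set_option maxHeartbeats 1000000 in
lemma key_estimate (f : E2 → ℝ) (n : ℕ) (x v : E2) (δ : ℝ) (hδ : 0 < δ)
    (dense1 : ∀ q : E2, ‖q‖ = 1 → ‖q - v‖ < δ → ∀ ε > (0:ℝ), ∃ u ∈ Bset f x n, ‖u - q‖ < ε)
    (y : E2) (hy : LipResidualDirs f y) (hyx : y ≠ x)
    (ht : ‖y - x‖ < 1/(2*((n:ℝ)+1)))
    (hw : ‖‖y - x‖⁻¹ • (y - x) - v‖ < δ/2) :
    |f y - f x| ≤ (2*(n:ℝ)+3) * ‖y - x‖ := by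
  set t := ‖y - x‖ with htdef
  have tpos : 0 < t := by
    rw [htdef]; exact norm_pos_iff.mpr (sub_ne_zero.mpr hyx)
  set w := t⁻¹ • (y - x) with hwdef
  have hwnorm : ‖w‖ = 1 := by
    rw [hwdef, norm_smul, Real.norm_eq_abs, abs_inv, abs_of_pos tpos, ← htdef]
    field_simp
  have hyw : y = x + t • w := by
    rw [hwdef, smul_smul, mul_inv_cancel₀ (ne_of_gt tpos), one_smul]
    abel
  obtain ⟨m, u', hu'B, hc⟩ := exists_u'_cross_ne f y w hwnorm hy
  obtain ⟨hu'norm, hu'bound⟩ := hu'B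
  set c := cross w u' with hcdef
  have hcabs : |c| ≤ 1 := by
    have := cross_abs_le w u'
    rwa [hwnorm, hu'norm, one_mul] at this
  have hcpos : 0 < |c| := abs_pos.mpr hc
  set σ : ℝ := if 0 < c then 1 else -1 with hσdef
  have hσ2 : σ^2 = 1 := by rw [hσdef]; split <;> norm_num
  have hσa : |σ| = 1 := by rw [hσdef]; split <;> norm_num
  have hσabs : σ * c = |c| := by
    rw [hσdef]; split
    · rw [abs_of_pos ‹_›]; ring
    · rw [abs_of_neg (lt_of_le_of_ne (not_lt.mp ‹_›) hc)]; ring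
  have hmpos : (0:ℝ) < (m:ℝ) + 1 := by positivity
  have hnpos : (0:ℝ) < (n:ℝ) + 1 := by positivity
  set b := min (δ/4) (min (|c|/4) (|c|/(3*((m:ℝ)+1)))) with hbdef
  have hbpos : 0 < b := by positivity
  have hbδ : b ≤ δ/4 := min_le_left _ _
  have hbc : b ≤ |c|/4 := le_trans (min_le_right _ _) (min_le_left _ _)
  have hbm : b ≤ |c|/(3*((m:ℝ)+1)) := le_trans (min_le_right _ _) (min_le_right _ _)
  have hb1 : b ≤ 1 := by linarith only [hbc, hcabs]
  set α := Real.sqrt (1 - b^2) with hα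
  have hb2 : (0:ℝ) ≤ 1 - b^2 := aux_sq_le_one hbpos.le hb1
  have hα2 : α^2 = 1 - b^2 := Real.sq_sqrt hb2
  have hαnn : 0 ≤ α := Real.sqrt_nonneg _
  have hα1 : 1 - α ≤ b^2 := aux_sqrt_lb hα2 hαnn hbpos.le hb1
  have hαle1 : α ≤ 1 := aux_alpha_le_one hα2 hαnn
  set u₀ := α • w + (b*σ) • rot w with hu₀def
  have hu₀norm : ‖u₀‖ = 1 := comb_norm w hwnorm α (b*σ) (aux_comb hα2 hσ2)
  have hu₀w : ‖u₀ - w‖ ≤ 3*b/2 := by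
    have h1 : ‖u₀ - w‖^2 = (α-1)^2 + (b*σ)^2 := comb_sub_norm_sq w hwnorm α (b*σ)
    apply le_of_sq_le' (norm_nonneg _) _ (by positivity)
    rw [h1]
    exact aux_u0w hα1 hαle1 hσ2 hbpos.le hb1
  have hu₀v : ‖u₀ - v‖ < δ := by
    have h1 : ‖u₀ - v‖ ≤ ‖u₀ - w‖ + ‖w - v‖ :=
      norm_sub_le_norm_sub_add_norm_sub u₀ w v
    have h2 : ‖w - v‖ < δ/2 := hw
    linarith only [h1, h2, hu₀w, hbδ, hδ]
  obtain ⟨u, huB, huu₀⟩ := dense1 u₀ hu₀norm hu₀v (b/2) (by positivity)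
  obtain ⟨hunorm, hubound⟩ := huB
  have hcu₀ : cross w u₀ = b*σ := cross_comb_right w hwnorm α (b*σ)
  set cwu := cross w u with hcwudef
  have e1 : |cwu - b*σ| ≤ ‖u - u₀‖ := by
    have := abs_cross_sub_right_le w u u₀ hwnorm
    rwa [hcu₀, ← hcwudef] at this
  have e1' : |σ*cwu - b| ≤ b/2 := by
    have hh : σ*cwu - b = σ * (cwu - b*σ) := by linear_combination b * hσ2
    rw [hh, abs_mul, hσa, one_mul]
    linarith only [e1, huu₀]
  have huw : ‖u - w‖ ≤ 2*b := by
    have := norm_sub_le_norm_sub_add_norm_sub u u₀ w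
    linarith only [this, huu₀, hu₀w]
  set D := cross u u' with hDdef
  have e2 : |D - c| ≤ 2*b := by
    have := abs_cross_sub_left_le u w u' hu'norm
    rw [← hDdef, ← hcdef] at this
    linarith only [this, huw]
  have e2' : |σ*D - abs c| ≤ 2*b := by
    have hh : σ*D - abs c = σ * (D - c) := by rw [← hσabs]; ring
    rw [hh, abs_mul, hσa, one_mul]
    exact e2
  have hσD1 : |c|/2 ≤ σ*D := by
    have := abs_le.mp e2'
    linarith only [this.1, hbc]
  have hσD2 : σ*D ≤ 3*|c|/2 := by
    have := abs_le.mp e2'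
    linarith only [this.2, hbc]
  have hDne : D ≠ 0 := by
    intro h0
    rw [h0, mul_zero] at hσD1
    linarith only [hσD1, hcpos]
  set τ := t * c / D with hτdef
  set s := t * cwu / D with hsdef
  have hσcwu1 : b/2 ≤ σ*cwu := by
    have := abs_le.mp e1'
    linarith only [this.1]
  have hσcwu2 : σ*cwu ≤ 3*b/2 := by
    have := abs_le.mp e1'
    linarith only [this.2]
  have hσDpos : 0 < σ*D := lt_of_lt_of_le (by positivity) hσD1
  have hsD : s * (σ*D) = t * (σ*cwu) := by
    rw [hsdef]; field_simp
  have hτD : τ * (σ*D) = t * |c| := by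
    rw [hτdef, ← hσabs]; field_simp
  have spos : 0 < s :=
    aux_pos_of_mul hsD hσDpos (mul_pos tpos (lt_of_lt_of_le (by positivity) hσcwu1))
  have τpos : 0 < τ :=
    aux_pos_of_mul hτD hσDpos (mul_pos tpos hcpos)
  have hb' : 3*((m:ℝ)+1)*b ≤ |c| := by
    rw [le_div_iff₀ (by positivity : (0:ℝ) < 3*((m:ℝ)+1))] at hbm
    linarith only [hbm]
  have hms : ((m:ℝ)+1) * s ≤ t :=
    aux_s hsD hσD1 hσcwu2 spos tpos hb' hmpos hcpos
  have hτle : τ ≤ 2*t := aux_tau hτD hσD1 τpos hcpos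
  have ht1 : t ≤ 1 := by
    have h0 : (0:ℝ) ≤ (n:ℝ) := Nat.cast_nonneg n
    have h1 : 1/(2*((n:ℝ)+1)) ≤ 1 := by
      rw [div_le_one (by positivity)]
      linarith only [h0]
    linarith only [ht, h1]
  -- the meeting point
  have hz : x + τ • u = y + s • u' := by
    rw [hyw]
    have hDne' : cross u u' ≠ 0 := hDdef ▸ hDne
    have key0 : τ * u 0 = t * w 0 + s * u' 0 := by
      rw [hτdef, hsdef, hcdef, hcwudef, hDdef]
      exact cramer0 u u' w t hDne'
    have key1 : τ * u 1 = t * w 1 + s * u' 1 := by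
      rw [hτdef, hsdef, hcdef, hcwudef, hDdef]
      exact cramer1 u u' w t hDne'
    have hcomp : τ • u = t • w + s • u' := by
      apply (WithLp.equiv 2 (Fin 2 → ℝ)).injective
      funext i
      fin_cases i <;>
        simpa [PiLp.add_apply, PiLp.smul_apply, smul_eq_mul] using (by assumption)
    rw [hcomp, add_assoc]
  have h1 : |f (y + s • u') - f y| ≤ ((m:ℝ)+1) * s := by
    apply hu'bound s
    exact ⟨spos, aux_le_inv hms ht1 hmpos⟩
  have h2 : |f (x + τ • u) - f x| ≤ ((n:ℝ)+1) * τ := by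
    apply hubound τ
    refine ⟨τpos, ?_⟩
    have := aux_half ht hnpos
    linarith only [this, hτle]
  rw [← hz] at h1
  have triangle : |f y - f x| ≤ |f (x + τ • u) - f y| + |f (x + τ • u) - f x| := by
    have := abs_sub_le (f y) (f (x + τ • u)) (f x)
    rwa [abs_sub_comm (f y) (f (x + τ • u))] at this
  have hnt : ((n:ℝ)+1) * τ ≤ ((n:ℝ)+1) * (2*t) :=
    mul_le_mul_of_nonneg_left hτle hnpos.le
  have goal' : |f y - f x| ≤ (2*(n:ℝ)+3) * t := by
    linarith only [triangle, h1, h2, hms, hnt, tpos]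
  exact goal'

/-- If `E` is the set of points at which `f` is Lipschitz in residually many directions, then for
every `x ∈ E` there is an open circular sector `C` with vertex `x` such that `f` is Lipschitz at
`x` relative to `E ∩ C`. -/
theorem stmt8 (f : E2 → ℝ) :
    ∀ x ∈ {x' : E2 | LipResidualDirs f x'},
      ∃ v ∈ Metric.sphere (0 : E2) 1, ∃ δ > (0 : ℝ), ∃ r > (0 : ℝ),
        LipAtRel f x ({x' : E2 | LipResidualDirs f x'} ∩ Sector x v δ r) := by
  intro x hx
  obtain ⟨n, v, hvnorm, δ, hδ, dense1⟩ := exists_dense_arc f x hx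
  have hnpos : (0:ℝ) < (n:ℝ) + 1 := by positivity
  refine ⟨v, mem_sphere_zero_iff_norm.mpr hvnorm, δ/2, by positivity,
    1/(2*((n:ℝ)+1)), by positivity, Or.inr ⟨2*(n:ℝ)+3, ?_⟩⟩
  rw [Filter.eventually_map]
  filter_upwards [self_mem_nhdsWithin] with y hy
  obtain ⟨⟨hyE, hySec⟩, -⟩ := hy
  obtain ⟨⟨hyx, hdir⟩, hball⟩ := hySec
  have hlt : ‖y - x‖ < 1/(2*((n:ℝ)+1)) := by
    rw [← dist_eq_norm]
    exact Metric.mem_ball.mp hball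
  have hkey := key_estimate f n x v δ hδ dense1 y hyE hyx hlt hdir
  have hpos : 0 < ‖y - x‖ := norm_pos_iff.mpr (sub_ne_zero.mpr hyx)
  rw [div_le_iff₀ hpos]
  exact hkey
end
end

section
/- For every open disc B ⊆ ℝ² of radius R > 0 there exists a sequence of pairwise disjoint open discs contained in B whose union U is dense in B and satisfies |U| < |B|/2, where |·| denotes Lebesgue measure on ℝ²; consequently B \ U is a Borel set of positive Lebesgue measure. -/
open Metric MeasureTheory Set

noncomputable section

/-!
The balls are obtained in two steps. First, a countable dense subset of `B` is null, so by outer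
regularity it lies in an open set `W ⊆ B` with `|W| < |B| / 2`; `W` is still dense in `B`. Second,
the Besicovitch covering theorem fills `W`, up to a null set, with countably many disjoint closed
balls inside `W`. The remainder is an open null set, hence empty, so the balls are dense in `W`,
and their union has measure at most `|W|`. There must be infinitely many of them, since otherwise
`W` would be a nonempty proper clopen subset of the plane.
-/

open scoped ENNReal

theorem exists_isOpen_subset_dense_measure_lt {X : Type*} [TopologicalSpace X]
    [TopologicalSpace.SeparableSpace X] [MeasurableSpace X] (μ : Measure X) [μ.OuterRegular]
    [NullSingletonClass μ] {B : Set X} (hB : IsOpen B) {ε : ℝ≥0∞}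
    (hε : 0 < ε) : ∃ W, IsOpen W ∧ W ⊆ B ∧ B ⊆ closure W ∧ μ W < ε := by
  obtain ⟨D, hDc, hD⟩ := TopologicalSpace.exists_countable_dense X
  obtain ⟨U, hDU, hU, hUε⟩ :=
    (B ∩ D).exists_isOpen_lt_of_lt ε (((hDc.mono inter_subset_right).measure_zero μ).symm ▸ hε)
  refine ⟨U ∩ B, hU.inter hB, inter_subset_right, ?_,
    (measure_mono inter_subset_left).trans_lt hUε⟩
  exact (hD.open_subset_closure_inter hB).trans (closure_mono fun x hx => ⟨hDU hx, hx.1⟩)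

theorem exists_countable_pairwiseDisjoint_closedBall_dense {α : Type*} [MetricSpace α]
    [SecondCountableTopology α] [MeasurableSpace α] [OpensMeasurableSpace α]
    [HasBesicovitchCovering α] (μ : Measure α) [SFinite μ] [μ.IsOpenPosMeasure]
    {W : Set α} (hW : IsOpen W) :
    ∃ (t : Set α) (r : α → ℝ), t.Countable ∧ (∀ x ∈ t, 0 < r x ∧ closedBall x (r x) ⊆ W) ∧
      t.PairwiseDisjoint (fun x => closedBall x (r x)) ∧
      W ⊆ closure (⋃ x ∈ t, closedBall x (r x)) := by
  have hWball : ∀ x ∈ W, ∃ R > 0, closedBall x R ⊆ W := fun x hx =>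
    nhds_basis_closedBall.mem_iff.1 (hW.mem_nhds hx)
  choose! R hRpos hRW using hWball
  obtain ⟨t, r, ht, htW, hr, hnull, hdisj⟩ :=
    Besicovitch.exists_disjoint_closedBall_covering_ae μ (fun _ => univ) W
      (fun _ _ δ hδ => ⟨δ / 2, trivial, half_pos hδ, half_lt_self hδ⟩) R hRpos
  refine ⟨t, r, ht, fun x hx => ⟨(hr x hx).2.1, ?_⟩, hdisj, ?_⟩
  · exact (closedBall_subset_closedBall (hr x hx).2.2.le).trans (hRW x (htW hx))
  · have hopen : IsOpen (W \ closure (⋃ x ∈ t, closedBall x (r x))) := hW.sdiff isClosed_closure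
    have hempty := (hopen.measure_eq_zero_iff μ).1
      (measure_mono_null (sdiff_subset_sdiff_right subset_closure) hnull)
    exact sdiff_eq_empty.1 hempty

theorem Set.infinite_of_isOpen_subset_closure_biUnion {X ι : Type*} [TopologicalSpace X]
    [PreconnectedSpace X]
    {W : Set X} (hW : IsOpen W) (hne : W.Nonempty) (hW_ne_univ : W ≠ univ) {t : Set ι}
    {K : ι → Set X} (hK : ∀ i ∈ t, IsClosed (K i)) (hKW : ∀ i ∈ t, K i ⊆ W)
    (hdense : W ⊆ closure (⋃ i ∈ t, K i)) : t.Infinite := by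
  intro hfin
  have hclosed : IsClosed (⋃ i ∈ t, K i) := hfin.isClosed_biUnion hK
  have hWK : W = ⋃ i ∈ t, K i :=
    (hdense.trans hclosed.closure_subset).antisymm (iUnion₂_subset hKW)
  exact hW_ne_univ (IsClopen.eq_univ ⟨hWK ▸ hclosed, hW⟩ hne)

theorem exists_seq_pairwise_disjoint_ball_dense {E : Type*} [NormedAddCommGroup E]
    [NormedSpace ℝ E] [FiniteDimensional ℝ E] [MeasurableSpace E] [BorelSpace E]
    (μ : Measure E) [SFinite μ] [μ.IsOpenPosMeasure] {W : Set E} (hW : IsOpen W)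
    (hne : W.Nonempty) (hW_ne_univ : W ≠ univ) :
    ∃ (x : ℕ → E) (r : ℕ → ℝ), (∀ i, 0 < r i) ∧
      (Pairwise fun i j => Disjoint (ball (x i) (r i)) (ball (x j) (r j))) ∧
      (∀ i, ball (x i) (r i) ⊆ W) ∧ W ⊆ closure (⋃ i, ball (x i) (r i)) := by
  obtain ⟨t, r, ht, htW, hdisj, hdense⟩ :=
    exists_countable_pairwiseDisjoint_closedBall_dense μ hW
  have hinf : t.Infinite := Set.infinite_of_isOpen_subset_closure_biUnion hW hne hW_ne_univ
    (fun _ _ => isClosed_closedBall) (fun x hx => (htW x hx).2) hdense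
  have := ht.to_subtype
  have := hinf.to_subtype
  obtain ⟨_⟩ := nonempty_denumerable t
  let e : ℕ ≃ t := (Denumerable.eqv t).symm
  refine ⟨fun i => e i, fun i => r (e i), fun i => (htW _ (e i).2).1, fun i j hij => ?_,
    fun i => ball_subset_closedBall.trans (htW _ (e i).2).2, hdense.trans ?_⟩
  · exact (hdisj (e i).2 (e j).2 (Subtype.coe_injective.ne (e.injective.ne hij))).mono
      ball_subset_closedBall ball_subset_closedBall
  · refine closure_minimal (iUnion₂_subset fun x hx => ?_) isClosed_closure
    rw [← closure_ball x (htW x hx).1.ne']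
    refine closure_mono (subset_iUnion_of_subset (e.symm ⟨x, hx⟩) ?_)
    simp

/-- For every open disc `B ⊆ ℝ²` of radius `R > 0` there is a sequence of pairwise disjoint open
discs contained in `B` whose union `U` is dense in `B` and satisfies `|U| < |B|/2`; consequently
`B \ U` is a Borel set of positive Lebesgue measure. -/
theorem stmt10 (c : E2) (R : ℝ) (hR : 0 < R) :
    ∃ (x : ℕ → E2) (r : ℕ → ℝ),
      (∀ i, 0 < r i) ∧
      (Pairwise fun i j => Disjoint (Metric.ball (x i) (r i)) (Metric.ball (x j) (r j))) ∧
      (∀ i, Metric.ball (x i) (r i) ⊆ Metric.ball c R) ∧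
      Metric.ball c R ⊆ closure (⋃ i, Metric.ball (x i) (r i)) ∧
      volume (⋃ i, Metric.ball (x i) (r i)) < volume (Metric.ball c R) / 2 ∧
      MeasurableSet (Metric.ball c R \ ⋃ i, Metric.ball (x i) (r i)) ∧
      0 < volume (Metric.ball c R \ ⋃ i, Metric.ball (x i) (r i)) := by
  have hB : volume (ball c R) ≠ 0 := (measure_ball_pos _ _ hR).ne'
  obtain ⟨W, hW, hWB, hBW, hWvol⟩ :=
    exists_isOpen_subset_dense_measure_lt (volume : Measure E2) isOpen_ball (ENNReal.half_pos hB)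
  have hne : W.Nonempty := closure_nonempty_iff.1 ((nonempty_ball.2 hR).mono hBW)
  have hW_ne_univ : W ≠ univ := fun h =>
    NormedSpace.unbounded_univ ℝ E2 (isBounded_ball.subset (h ▸ hWB))
  obtain ⟨x, r, hr, hdisj, hxW, hWU⟩ :=
    exists_seq_pairwise_disjoint_ball_dense volume hW hne hW_ne_univ
  have hU : volume (⋃ i, ball (x i) (r i)) < volume (ball c R) / 2 :=
    (measure_mono (iUnion_subset hxW)).trans_lt hWvol
  refine ⟨x, r, hr, hdisj, fun i => (hxW i).trans hWB,
    hBW.trans (closure_minimal hWU isClosed_closure), hU,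
    measurableSet_ball.diff (.iUnion fun _ => measurableSet_ball), ?_⟩
  calc 0 < volume (ball c R) - volume (⋃ i, ball (x i) (r i)) :=
        tsub_pos_of_lt (hU.trans (ENNReal.half_lt_self hB measure_ball_lt_top.ne))
    _ ≤ _ := le_measure_sdiff
end
end

section
/- Let y ∈ ℝ² and let (B_i)_{i∈ℕ} be a sequence of open discs B_i = B(x_i, r_i) in ℝ² such that y ∉ cl(B_i) for every i and the sum over i of r_i/‖y−x_i‖ is finite. Then the set of directions {u ∈ S¹ : the ray {y + tu : t > 0} intersects B_i for infinitely many i} has zero one-dimensional Hausdorff measure H¹ in S¹. -/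
/-!
Let `D i` be the set of unit directions whose ray from `y` meets `B i`. If the ray in direction
`u` meets `B(x, r)` at distance `t`, then `|‖x - y‖ - t| < r`, so `u` lies within
`2 r / ‖y - x‖` of the direction of `x - y`; hence `diam (D i) ≤ 4 rᵢ / ‖y - xᵢ‖` is summable.
The bad set is `limsup D`, which is covered by every tail `{D i | i ≥ n}`, and the sum of the
diameters of these tails tends to `0`: a Borel–Cantelli lemma for Hausdorff measure.
-/

open Metric MeasureTheory Set

noncomputable section

open Filter ENNReal

theorem hausdorffMeasure_limsup_atTop_eq_zero {X : Type*} [EMetricSpace X] [MeasurableSpace X]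
    [BorelSpace X] {d : ℝ} (hd : 0 < d) {s : ℕ → Set X} (hs : ∑' i, ediam (s i) ^ d ≠ ∞) :
    μH[d] (limsup s atTop) = 0 := by
  have htail := ENNReal.tendsto_sum_nat_add (fun i => ediam (s i) ^ d) hs
  refine le_antisymm ?_ zero_le
  calc μH[d] (limsup s atTop)
      ≤ liminf (fun n => ∑' i, ediam (s (i + n)) ^ d) atTop := by
        refine Measure.hausdorffMeasure_le_liminf_tsum d _
          (fun n => (∑' i, ediam (s (i + n)) ^ d) ^ d⁻¹) ?_ (fun n i => s (i + n))
          (Eventually.of_forall fun n i => ?_) (Eventually.of_forall fun n => ?_)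
        · have := ((ENNReal.continuous_rpow_const (y := d⁻¹)).tendsto 0).comp htail
          rwa [ENNReal.zero_rpow_of_pos (inv_pos.mpr hd)] at this
        · calc ediam (s (i + n)) = (ediam (s (i + n)) ^ d) ^ d⁻¹ :=
                (ENNReal.rpow_rpow_inv hd.ne' _).symm
            _ ≤ _ := ENNReal.rpow_le_rpow (ENNReal.le_tsum i) (inv_nonneg.mpr hd.le)
        · rw [limsup_eq_iInf_iSup_of_nat']
          exact iInter_subset _ n
    _ = 0 := htail.liminf_eq

theorem norm_norm_smul_sub_le {E : Type*} [SeminormedAddCommGroup E] [NormedSpace ℝ E]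
    {u w : E} (hu : ‖u‖ = 1) {t : ℝ} (ht : 0 ≤ t) : ‖‖w‖ • u - w‖ ≤ 2 * ‖t • u - w‖ := by
  have hnorm : |‖w‖ - t| ≤ ‖t • u - w‖ := by
    simpa [norm_smul, hu, abs_of_nonneg ht, norm_sub_rev w] using abs_norm_sub_norm_le w (t • u)
  calc ‖‖w‖ • u - w‖ = ‖(‖w‖ - t) • u + (t • u - w)‖ := by rw [sub_smul]; abel_nf
    _ ≤ |‖w‖ - t| + ‖t • u - w‖ := by
        simpa [norm_smul, hu] using norm_add_le ((‖w‖ - t) • u) (t • u - w)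
    _ ≤ 2 * ‖t • u - w‖ := by linarith

section Directions

variable {E : Type*} [SeminormedAddCommGroup E] [NormedSpace ℝ E]

def hittingDirections (y : E) (B : Set E) : Set E :=
  {u | u ∈ sphere (0 : E) 1 ∧ ∃ t > (0 : ℝ), y + t • u ∈ B}

theorem hittingDirections_ball_subset_closedBall {y x : E} {r : ℝ} (hy : y ∉ ball x r) :
    hittingDirections y (ball x r) ⊆ closedBall (‖x - y‖⁻¹ • (x - y)) (2 * (r / ‖y - x‖)) := by
  rintro u ⟨hu, t, ht, hmem⟩
  rw [mem_sphere_zero_iff_norm] at hu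
  have hlt : ‖t • u - (x - y)‖ < r := by
    rwa [mem_ball_iff_norm, show y + t • u - x = t • u - (x - y) by abel] at hmem
  have hd : 0 < ‖x - y‖ := by
    rw [mem_ball, dist_eq_norm, not_lt, norm_sub_rev] at hy
    linarith [norm_nonneg (t • u - (x - y))]
  have hrescale : ‖x - y‖⁻¹ • (‖x - y‖ • u - (x - y)) = u - ‖x - y‖⁻¹ • (x - y) := by
    rw [smul_sub, smul_smul, inv_mul_cancel₀ hd.ne', one_smul]
  rw [mem_closedBall, dist_eq_norm]
  calc ‖u - ‖x - y‖⁻¹ • (x - y)‖ = ‖x - y‖⁻¹ * ‖‖x - y‖ • u - (x - y)‖ := by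
        rw [← hrescale, norm_smul, norm_inv, norm_norm]
    _ ≤ ‖x - y‖⁻¹ * (2 * r) := by
        gcongr
        exact (norm_norm_smul_sub_le hu ht.le).trans (by linarith)
    _ = 2 * (r / ‖y - x‖) := by rw [norm_sub_rev]; ring

theorem ediam_hittingDirections_ball_le {y x : E} {r : ℝ} (hy : y ∉ ball x r) :
    ediam (hittingDirections y (ball x r)) ≤ ENNReal.ofReal (4 * (r / ‖y - x‖)) := by
  refine ediam_le fun u hu v hv => ?_
  have hu' := hittingDirections_ball_subset_closedBall hy hu
  have hv' := hittingDirections_ball_subset_closedBall hy hv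
  rw [mem_closedBall] at hu' hv'
  rw [edist_dist]
  exact ENNReal.ofReal_le_ofReal <| (dist_triangle_right u v _).trans <|
    (add_le_add hu' hv').trans_eq (by ring)

end Directions

/-- If `y` lies outside the closure of each disc `B_i = B(x_i, r_i)` and `∑ r_i/‖y−x_i‖ < ∞`,
then the set of unit directions whose ray from `y` meets infinitely many of the discs has zero
one-dimensional Hausdorff measure. -/
theorem stmt11 (y : E2) (x : ℕ → E2) (r : ℕ → ℝ)
    (hcl : ∀ i, y ∉ closure (Metric.ball (x i) (r i)))
    (hsum : Summable fun i => r i / ‖y - x i‖) :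
    MeasureTheory.Measure.hausdorffMeasure 1
      {u : E2 | u ∈ Metric.sphere (0 : E2) 1 ∧
        Set.Infinite {i : ℕ | ∃ t > (0 : ℝ), y + t • u ∈ Metric.ball (x i) (r i)}} = 0 := by
  set D := fun i => hittingDirections y (ball (x i) (r i))
  have hsub : {u : E2 | u ∈ sphere (0 : E2) 1 ∧
      Set.Infinite {i : ℕ | ∃ t > (0 : ℝ), y + t • u ∈ ball (x i) (r i)}} ⊆ limsup D atTop := by
    rintro u ⟨hu, hinf⟩
    rw [mem_limsup_iff_frequently_mem, Nat.frequently_atTop_iff_infinite]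
    exact hinf.mono fun i hi => ⟨hu, hi⟩
  have hdiam : ∀ i, ediam (D i) ^ (1 : ℝ) ≤ ENNReal.ofReal (4 * (r i / ‖y - x i‖)) := fun i => by
    rw [ENNReal.rpow_one]
    exact ediam_hittingDirections_ball_le fun h => hcl i (subset_closure h)
  exact measure_mono_null hsub <| hausdorffMeasure_limsup_atTop_eq_zero one_pos <|
    ne_top_of_le_ne_top (hsum.mul_left 4).tsum_ofReal_ne_top (ENNReal.tsum_le_tsum hdiam)
end
end
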